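/- arXiv:1301.6361 — 7 statements merged into one kernel-verified Lean document; each statement's English description precedes it below -/
import Mathlib

section
/- Let G be a finite group, N a normal subgroup of G, and H a p-subgroup of G with H ≤ N. If H satisfies the partial Π-property in G, then H satisfies the partial Π-property in N. -/
open Subgroup

section PartialPiDefs

variable (G : Type*) [Group G]

/-- The index condition of the Π-property for the factor `L/K` with respect to `H`:
`|G/K : N_{G/K}(HK/K ∩ L/K)|` is a `π(HK/K ∩ L/K)`-number. -/
def PiCond (H K L : Subgroup G) : Prop :=
  ∀ q : ℕ, q.Prime → q ∣ (normalizer (((H ⊔ K) ⊓ L : Subgroup G) : Set G)).index →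
    q ∣ K.relIndex ((H ⊔ K) ⊓ L)

/-- `L/K` is a chief factor of `G`. -/
def IsChiefFactor (K L : Subgroup G) : Prop :=
  K.Normal ∧ L.Normal ∧ K < L ∧
    ∀ N : Subgroup G, N.Normal → K ≤ N → N ≤ L → N = K ∨ N = L

/-- `H` satisfies the Π-property in `G`. -/
def PiProperty (H : Subgroup G) : Prop :=
  ∀ K L : Subgroup G, IsChiefFactor G K L → PiCond G H K L

/-- A chief series of `G`. -/
structure ChiefSeries where
  len : ℕ
  ser : Fin (len + 1) → Subgroup G
  bot_eq : ser 0 = ⊥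
  top_eq : ser (Fin.last len) = ⊤
  chief : ∀ i : Fin len, IsChiefFactor G (ser i.castSucc) (ser i.succ)

/-- `H` satisfies the partial Π-property in `G`. -/
def PartialPiProperty (H : Subgroup G) : Prop :=
  ∃ C : ChiefSeries G, ∀ i : Fin C.len,
    PiCond G H (C.ser i.castSucc) (C.ser i.succ)

end PartialPiDefs

section Aux

variable {Γ : Type*} [Group Γ]

lemma aux_map_conj_eq {A : Subgroup Γ} {x : Γ} (hA : x ∈ normalizer (A : Set Γ)) :
    A.map (MulAut.conj x).toMonoidHom = A := by
  rw [Subgroup.mem_normalizer_iff] at hA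
  ext y
  simp only [Subgroup.mem_map, MulEquiv.coe_toMonoidHom, MulAut.conj_apply]
  constructor
  · rintro ⟨a, ha, rfl⟩
    exact (hA a).1 ha
  · intro hy
    refine ⟨x⁻¹ * y * x, ?_, by group⟩
    apply (hA (x⁻¹ * y * x)).2
    have hxy : x * (x⁻¹ * y * x) * x⁻¹ = y := by group
    rwa [hxy]

lemma aux_mem_normalizer_of_map {A : Subgroup Γ} {x : Γ}
    (h : A.map (MulAut.conj x).toMonoidHom = A) : x ∈ normalizer (A : Set Γ) := by
  rw [Subgroup.mem_normalizer_iff]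
  intro g
  constructor
  · intro hg
    rw [← h]
    exact ⟨g, hg, rfl⟩
  · intro hg
    rw [← h] at hg
    obtain ⟨a, ha, he⟩ := hg
    have he' : x * a * x⁻¹ = x * g * x⁻¹ := by simpa using he
    have : a = g := mul_left_cancel (mul_right_cancel he')
    rwa [← this]

lemma aux_norm_sup {A B : Subgroup Γ} {x : Γ} (hA : x ∈ normalizer (A : Set Γ))
    (hB : x ∈ normalizer (B : Set Γ)) : x ∈ normalizer ((A ⊔ B : Subgroup Γ) : Set Γ) :=
  aux_mem_normalizer_of_map
    (by rw [Subgroup.map_sup, aux_map_conj_eq hA, aux_map_conj_eq hB])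

lemma aux_norm_inf {A B : Subgroup Γ} {x : Γ} (hA : x ∈ normalizer (A : Set Γ))
    (hB : x ∈ normalizer (B : Set Γ)) : x ∈ normalizer ((A ⊓ B : Subgroup Γ) : Set Γ) :=
  aux_mem_normalizer_of_map
    (by rw [Subgroup.map_inf _ _ _ (MulEquiv.injective _), aux_map_conj_eq hA,
      aux_map_conj_eq hB])

lemma aux_relIndex_dvd_index [Finite Γ] (X M : Subgroup Γ) (hM : M.Normal) :
    X.relIndex M ∣ X.index := by
  haveI := hM
  have e1 : X.relIndex M * M.index = (X ⊓ M).index := by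
    rw [← Subgroup.inf_relIndex_right X M]
    exact Subgroup.relIndex_mul_index inf_le_right
  have e2 : M.relIndex X * X.index = (X ⊓ M).index := by
    rw [← Subgroup.inf_relIndex_left X M]
    exact Subgroup.relIndex_mul_index inf_le_left
  have e3 : M.relIndex (X ⊔ M) * (X ⊔ M).index = M.index :=
    Subgroup.relIndex_mul_index le_sup_right
  have e4 : M.relIndex (X ⊔ M) = M.relIndex X := Subgroup.relIndex_sup_right X M
  have hc : M.relIndex X ≠ 0 := Subgroup.index_ne_zero_of_finite
  refine ⟨(X ⊔ M).index, ?_⟩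
  have key : X.relIndex M * (M.relIndex X * (X ⊔ M).index) = M.relIndex X * X.index := by
    rw [e4] at e3
    rw [e3, e1, e2]
  have key2 : M.relIndex X * (X.relIndex M * (X ⊔ M).index) = M.relIndex X * X.index := by
    rw [← key]; ring
  exact (Nat.eq_of_mul_eq_mul_left (Nat.pos_of_ne_zero hc) key2).symm

lemma aux_relIndex_dvd_card [Finite Γ] (H K M : Subgroup Γ) (hK : K.Normal) :
    K.relIndex ((H ⊔ K) ⊓ M) ∣ Nat.card H := by
  haveI := hK
  set X : Subgroup Γ := (H ⊔ K) ⊓ M with hX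
  set φ : ↥X →* Γ ⧸ K := (QuotientGroup.mk' K).comp X.subtype with hφ
  have hker : φ.ker = K.subgroupOf X := by
    rw [hφ, ← MonoidHom.comap_ker, QuotientGroup.ker_mk']
    rfl
  have h1 : K.relIndex X = Nat.card φ.range := by
    rw [Subgroup.relIndex, ← hker, Subgroup.index_ker]
  have h2 : φ.range ≤ H.map (QuotientGroup.mk' K) := by
    rintro y ⟨x, rfl⟩
    have hx : (x : Γ) ∈ H ⊔ K := (Subgroup.mem_inf.mp x.2).1
    rw [← SetLike.mem_coe, Subgroup.mul_normal] at hx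
    obtain ⟨h, hh, k, hk, he⟩ := hx
    have hk1 : (QuotientGroup.mk' K) k = 1 := by
      rw [← MonoidHom.mem_ker, QuotientGroup.ker_mk']
      exact hk
    have : φ x = (QuotientGroup.mk' K) h := by
      show (QuotientGroup.mk' K) (x : Γ) = _
      rw [← he, map_mul, hk1, mul_one]
    rw [this]
    exact Subgroup.mem_map_of_mem _ hh
  have h3 : Nat.card (H.map (QuotientGroup.mk' K)) ∣ Nat.card H := by
    have heq : H.map (QuotientGroup.mk' K) = ((QuotientGroup.mk' K).comp H.subtype).range := by
      ext y
      simp only [Subgroup.mem_map, MonoidHom.mem_range, MonoidHom.comp_apply]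
      constructor
      · rintro ⟨a, ha, rfl⟩; exact ⟨⟨a, ha⟩, rfl⟩
      · rintro ⟨a, rfl⟩; exact ⟨a, a.2, rfl⟩
    rw [heq, ← Subgroup.index_ker]
    exact Subgroup.index_dvd_card _
  rw [h1]
  exact (Subgroup.card_dvd_of_le h2).trans h3

end Aux

section Steps

variable {G : Type*} [Group G] [Finite G]

lemma aux_E_eq (N H K M : Subgroup G) (hK : K.Normal) (hHN : H ≤ N)
    (S T : Subgroup ↥N) (hSn : S.Normal)
    (hKS : K.subgroupOf N ≤ S) (hST : S ≤ T) (hTM : T ≤ M.subgroupOf N) :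
    (H.subgroupOf N ⊔ S) ⊓ T = (((H ⊔ K) ⊓ M).subgroupOf N ⊓ T) ⊔ S := by
  haveI := hSn
  haveI := hK
  apply le_antisymm
  · intro x hx
    obtain ⟨hx1, hx2⟩ := Subgroup.mem_inf.mp hx
    rw [← SetLike.mem_coe, Subgroup.mul_normal] at hx1
    obtain ⟨h, hh, s, hs, he⟩ := hx1
    have hhT : h ∈ T := by
      have : h = x * s⁻¹ := by rw [← he]; group
      rw [this]
      exact Subgroup.mul_mem _ hx2 (Subgroup.inv_mem _ (hST hs))
    have hhD : h ∈ ((H ⊔ K) ⊓ M).subgroupOf N := by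
      rw [Subgroup.mem_subgroupOf, Subgroup.mem_inf]
      exact ⟨Subgroup.mem_sup_left (Subgroup.mem_subgroupOf.mp hh), hTM hhT⟩
    rw [← he]
    exact Subgroup.mul_mem _ (Subgroup.mem_sup_left (Subgroup.mem_inf.mpr ⟨hhD, hhT⟩))
      (Subgroup.mem_sup_right hs)
  · refine sup_le ?_ (le_inf le_sup_right hST)
    intro x hx
    obtain ⟨hx1, hx2⟩ := Subgroup.mem_inf.mp hx
    rw [Subgroup.mem_subgroupOf, Subgroup.mem_inf] at hx1
    obtain ⟨hxHK, _⟩ := hx1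
    rw [← SetLike.mem_coe, Subgroup.mul_normal] at hxHK
    obtain ⟨h, hh, k, hk, he⟩ := hxHK
    have hhN : h ∈ N := hHN hh
    have hkN : k ∈ N := by
      have : k = h⁻¹ * (x : G) := by rw [← he]; group
      rw [this]
      exact Subgroup.mul_mem _ (Subgroup.inv_mem _ hhN) x.2
    have hxe : x = (⟨h, hhN⟩ : ↥N) * ⟨k, hkN⟩ := by
      apply Subtype.ext
      simp [he]
    refine Subgroup.mem_inf.mpr ⟨?_, hx2⟩
    rw [hxe]
    exact Subgroup.mul_mem _
      (Subgroup.mem_sup_left (Subgroup.mem_subgroupOf.mpr hh))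
      (Subgroup.mem_sup_right (hKS (Subgroup.mem_subgroupOf.mpr hk)))

lemma aux_step {p : ℕ} (hp : p.Prime)
    (N H : Subgroup G) (hN : N.Normal) (hHp : IsPGroup p H) (hHN : H ≤ N)
    (K M : Subgroup G) (hKn : K.Normal) (hMn : M.Normal)
    (hpi : PiCond G H K M)
    (S T : Subgroup ↥N) (hSn : S.Normal) (hTn : T.Normal)
    (hKS : K.subgroupOf N ≤ S) (hST : S ≤ T) (hTM : T ≤ M.subgroupOf N) :
    PiCond ↥N (H.subgroupOf N) S T := by
  haveI := hSn
  haveI := hTn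
  haveI := hKn
  haveI : Fact p.Prime := ⟨hp⟩
  intro q hq hqd
  by_cases hc : H.subgroupOf N ⊓ T ≤ S
  · have hE : (H.subgroupOf N ⊔ S) ⊓ T = S := by
      apply le_antisymm
      · intro x hx
        obtain ⟨hx1, hx2⟩ := Subgroup.mem_inf.mp hx
        rw [← SetLike.mem_coe, Subgroup.mul_normal] at hx1
        obtain ⟨h, hh, s, hs, he⟩ := hx1
        have hhT : h ∈ T := by
          have : h = x * s⁻¹ := by rw [← he]; group
          rw [this]
          exact Subgroup.mul_mem _ hx2 (Subgroup.inv_mem _ (hST hs))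
        have hhS : h ∈ S := hc (Subgroup.mem_inf.mpr ⟨hh, hhT⟩)
        rw [← he]
        exact Subgroup.mul_mem _ hhS hs
      · exact le_inf le_sup_right hST
    rw [hE, Subgroup.normalizer_eq_top_iff.mpr hSn, Subgroup.index_top] at hqd
    exact absurd (Nat.dvd_one.mp hqd) hq.ne_one
  · obtain ⟨x0, hx0mem, hx0S⟩ := SetLike.not_le_iff_exists.mp hc
    have key1 : (normalizer (((H.subgroupOf N ⊔ S) ⊓ T : Subgroup ↥N) : Set ↥N)).index ∣
        (normalizer (((H ⊔ K) ⊓ M : Subgroup G) : Set G)).index := by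
      have hle : (normalizer (((H ⊔ K) ⊓ M : Subgroup G) : Set G)).subgroupOf N ≤
          normalizer (((H.subgroupOf N ⊔ S) ⊓ T : Subgroup ↥N) : Set ↥N) := by
        intro x hx
        have hxn : (x : G) ∈ normalizer (((H ⊔ K) ⊓ M : Subgroup G) : Set G) := Subgroup.mem_subgroupOf.mp hx
        rw [aux_E_eq N H K M hKn hHN S T hSn hKS hST hTM]
        apply aux_norm_sup
        · apply aux_norm_inf
          · rw [Subgroup.mem_normalizer_iff] at hxn ⊢
            intro g
            simp only [Subgroup.mem_subgroupOf]
            simpa using hxn (g : G)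
          · rw [Subgroup.normalizer_eq_top_iff.mpr hTn]; exact Subgroup.mem_top x
        · rw [Subgroup.normalizer_eq_top_iff.mpr hSn]; exact Subgroup.mem_top x
      calc (normalizer (((H.subgroupOf N ⊔ S) ⊓ T : Subgroup ↥N) : Set ↥N)).index
          ∣ ((normalizer (((H ⊔ K) ⊓ M : Subgroup G) : Set G)).subgroupOf N).index :=
            Subgroup.index_dvd_of_le hle
        _ = (normalizer (((H ⊔ K) ⊓ M : Subgroup G) : Set G)).relIndex N := rfl
        _ ∣ (normalizer (((H ⊔ K) ⊓ M : Subgroup G) : Set G)).index := aux_relIndex_dvd_index _ _ hN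
    have hqD : q ∣ K.relIndex ((H ⊔ K) ⊓ M) := hpi q hq (hqd.trans key1)
    have hqp : q = p := by
      obtain ⟨n, hn⟩ := IsPGroup.iff_card.mp hHp
      have hdq : q ∣ p ^ n := by
        rw [← hn]
        exact hqD.trans (aux_relIndex_dvd_card H K M hKn)
      exact (Nat.prime_dvd_prime_iff_eq hq hp).mp (hq.dvd_of_dvd_pow hdq)
    have hH'p : IsPGroup p (H.subgroupOf N) :=
      IsPGroup.comap_of_injective hHp N.subtype N.subtype_injective
    obtain ⟨m, hm⟩ := IsPGroup.iff_card.mp hH'p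
    have hrel : S.relIndex ((H.subgroupOf N ⊔ S) ⊓ T) ∣ p ^ m := by
      rw [← hm]
      exact aux_relIndex_dvd_card _ S T hSn
    have hne : S.relIndex ((H.subgroupOf N ⊔ S) ⊓ T) ≠ 1 := by
      intro h1
      have hle' : (H.subgroupOf N ⊔ S) ⊓ T ≤ S := Subgroup.relIndex_eq_one.mp h1
      obtain ⟨hx1, hx2⟩ := Subgroup.mem_inf.mp hx0mem
      exact hx0S (hle' (Subgroup.mem_inf.mpr ⟨Subgroup.mem_sup_left hx1, hx2⟩))
    obtain ⟨k, hkle, hkeq⟩ := (Nat.dvd_prime_pow hp).mp hrel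
    rw [hqp, hkeq]
    rcases Nat.eq_zero_or_pos k with hk0 | hkpos
    · exact absurd (by rw [hkeq, hk0, pow_zero]) hne
    · exact dvd_pow_self p (Nat.pos_iff_ne_zero.mp hkpos)

end Steps

section Chains

variable {Γ : Type*} [Group Γ]

/-- A partial chief series from `⊥` up to `A`, all of whose factors satisfy the
Π-condition for `H`. -/
def GoodChain (H A : Subgroup Γ) : Prop :=
  ∃ (m : ℕ) (T : Fin (m + 1) → Subgroup Γ), T 0 = ⊥ ∧ T (Fin.last m) = A ∧
    ∀ j : Fin m, IsChiefFactor Γ (T j.castSucc) (T j.succ) ∧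
      PiCond Γ H (T j.castSucc) (T j.succ)

lemma goodChain_bot (H : Subgroup Γ) : GoodChain H (⊥ : Subgroup Γ) :=
  ⟨0, fun _ => ⊥, rfl, rfl, fun j => j.elim0⟩

lemma goodChain_snoc {H S B : Subgroup Γ} (hg : GoodChain H S)
    (hchief : IsChiefFactor Γ S B) (hpc : PiCond Γ H S B) : GoodChain H B := by
  obtain ⟨m, T, hT0, hTl, hTf⟩ := hg
  refine ⟨m + 1, Fin.snoc T B, ?_, ?_, ?_⟩
  · rw [show (0 : Fin (m + 2)) = Fin.castSucc 0 by rfl, Fin.snoc_castSucc, hT0]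
  · rw [Fin.snoc_last]
  · intro j
    induction j using Fin.lastCases with
    | last =>
      simp only [Fin.snoc_castSucc, Fin.succ_last, Fin.snoc_last, hTl]
      exact ⟨hchief, hpc⟩
    | cast k =>
      simp only [Fin.succ_castSucc, Fin.snoc_castSucc]
      exact hTf k
end Chains

section Seg

variable {G : Type*} [Group G] [Finite G]

lemma aux_card_lt {N : Subgroup G} {S B : Subgroup ↥N} (h : S < B) :
    Nat.card S < Nat.card B := by
  have hs : (S : Set ↥N) ⊂ (B : Set ↥N) := SetLike.coe_ssubset_coe.mpr h
  have := Set.ncard_lt_ncard hs (Set.toFinite _)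
  rw [← Nat.card_coe_set_eq, ← Nat.card_coe_set_eq] at this; exact this

lemma goodChain_seg {p : ℕ} (hp : p.Prime)
    (N H : Subgroup G) (hN : N.Normal) (hHp : IsPGroup p H) (hHN : H ≤ N)
    (K M : Subgroup G) (hKn : K.Normal) (hMn : M.Normal)
    (hpi : PiCond G H K M)
    (hgood : GoodChain (H.subgroupOf N) (K.subgroupOf N)) :
    ∀ (n : ℕ) (B : Subgroup ↥N), Nat.card B ≤ n → B.Normal →
      K.subgroupOf N ≤ B → B ≤ M.subgroupOf N → GoodChain (H.subgroupOf N) B := by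
  intro n
  induction n with
  | zero =>
    intro B hB _ _ _
    exact absurd hB (by have : 0 < Nat.card B := Nat.card_pos; omega)
  | succ n ih =>
    intro B hB hBn hKB hBM
    by_cases hBK : B ≤ K.subgroupOf N
    · rwa [le_antisymm hBK hKB]
    · have hne : {S : Subgroup ↥N | S.Normal ∧ K.subgroupOf N ≤ S ∧ S < B}.Nonempty :=
        ⟨K.subgroupOf N, hKn.comap N.subtype, le_rfl,
          lt_of_le_of_ne hKB (fun e => hBK (e ▸ le_rfl))⟩
      obtain ⟨S, hSmem, hSmax⟩ :=
        Set.Finite.exists_maximalFor id _ (Set.toFinite _) hne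
      obtain ⟨hSn', hKS, hSB⟩ := hSmem
      have hchief : IsChiefFactor ↥N S B := by
        refine ⟨hSn', hBn, hSB, fun R hRn hSR hRB => ?_⟩
        by_cases hRB' : R = B
        · exact Or.inr hRB'
        · exact Or.inl
            (le_antisymm (hSmax ⟨hRn, hKS.trans hSR, lt_of_le_of_ne hRB hRB'⟩ hSR) hSR)
      have hpc : PiCond ↥N (H.subgroupOf N) S B :=
        aux_step hp N H hN hHp hHN K M hKn hMn hpi S B hSn' hBn hKS hSB.le hBM
      have hScard : Nat.card S ≤ n := by
        have := aux_card_lt hSB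
        omega
      exact goodChain_snoc (ih S hScard hSn' hKS (hSB.le.trans hBM)) hchief hpc

end Seg

theorem partial_pi_property_of_le_normal
    (G : Type*) [Group G] [Finite G] (p : ℕ) (hp : p.Prime)
    (N H : Subgroup G) (hN : N.Normal) (hHp : IsPGroup p H) (hHN : H ≤ N)
    (h : PartialPiProperty G H) :
    PartialPiProperty N (H.subgroupOf N) := by
  obtain ⟨C, hC⟩ := h
  have main : ∀ i : Fin (C.len + 1),
      GoodChain (H.subgroupOf N) ((C.ser i).subgroupOf N) := by
    intro i
    induction i using Fin.induction with
    | zero =>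
      rw [C.bot_eq]
      have : (⊥ : Subgroup G).subgroupOf N = ⊥ := Subgroup.bot_subgroupOf N
      rw [this]
      exact goodChain_bot _
    | succ i ihi =>
      obtain ⟨hKn, hMn, hlt, _⟩ := C.chief i
      exact goodChain_seg hp N H hN hHp hHN _ _ hKn hMn (hC i) ihi
        (Nat.card ((C.ser i.succ).subgroupOf N)) _ le_rfl (hMn.comap N.subtype)
        (Subgroup.comap_mono hlt.le) le_rfl
  have htop := main (Fin.last C.len)
  rw [C.top_eq] at htop
  have : (⊤ : Subgroup G).subgroupOf N = ⊤ := by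
    rw [Subgroup.subgroupOf, Subgroup.comap_top]
  rw [this] at htop
  obtain ⟨m, T, hT0, hTl, hTf⟩ := htop
  exact ⟨⟨m, T, hT0, hTl, fun j => (hTf j).1⟩, fun j => (hTf j).2⟩
end

section
/- Let G be a finite group, H a subgroup, and N a normal subgroup of G such that either N ≤ H or gcd(|H|, |N|) = 1. If H satisfies the partial Π-property in G, then HN/N satisfies the partial Π-property in G/N. -/
open Subgroup

open Pointwise

section Aux
variable {G : Type*} [Group G] (N : Subgroup G) [N.Normal]

lemma aux_comap_map (A : Subgroup G) (hA : N ≤ A) :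
    comap (QuotientGroup.mk' N) (map (QuotientGroup.mk' N) A) = A := by
  rw [comap_map_eq, QuotientGroup.ker_mk', sup_of_le_left hA]

lemma aux_map_inf (A B : Subgroup G) (hA : N ≤ A) (hB : N ≤ B) :
    map (QuotientGroup.mk' N) (A ⊓ B)
      = map (QuotientGroup.mk' N) A ⊓ map (QuotientGroup.mk' N) B := by
  have h := map_comap_eq_self_of_surjective (QuotientGroup.mk'_surjective N)
    (map (QuotientGroup.mk' N) A ⊓ map (QuotientGroup.mk' N) B)
  rw [comap_inf, aux_comap_map N A hA, aux_comap_map N B hB] at h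
  exact h

lemma aux_map_normalizer (X : Subgroup G) (hX : N ≤ X) :
    normalizer (map (QuotientGroup.mk' N) X : Set (G ⧸ N)) = map (QuotientGroup.mk' N) (normalizer (X : Set G)) := by
  have h := comap_normalizer_eq_of_surjective (map (QuotientGroup.mk' N) X)
    (QuotientGroup.mk'_surjective N)
  rw [aux_comap_map N X hX] at h
  have h2 := map_comap_eq_self_of_surjective (QuotientGroup.mk'_surjective N)
    (normalizer (map (QuotientGroup.mk' N) X : Set (G ⧸ N)))
  rw [h] at h2
  exact h2.symm

lemma aux_index_map (X : Subgroup G) (hX : N ≤ X) :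
    (map (QuotientGroup.mk' N) X).index = X.index :=
  X.index_map_eq (QuotientGroup.mk'_surjective N)
    (by rw [QuotientGroup.ker_mk']; exact hX)

lemma aux_relIndex_map [Finite G] (K X : Subgroup G) (hK : N ≤ K) (hKX : K ≤ X) :
    (map (QuotientGroup.mk' N) K).relIndex (map (QuotientGroup.mk' N) X) = K.relIndex X := by
  have hNX : N ≤ X := hK.trans hKX
  have h1 := relIndex_mul_index
    (map_mono hKX : map (QuotientGroup.mk' N) K ≤ map (QuotientGroup.mk' N) X)
  have h2 := relIndex_mul_index hKX
  rw [aux_index_map N X hNX, aux_index_map N K hK] at h1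
  have hz : 0 < X.index := Nat.pos_of_ne_zero index_ne_zero_of_finite
  exact Nat.eq_of_mul_eq_mul_right hz (h1.trans h2.symm)

lemma aux_normalizer_le (Y : Subgroup G) : normalizer (Y : Set G) ≤ normalizer ((Y ⊔ N : Subgroup G) : Set G) := by
  have key : ∀ g' ∈ normalizer (Y : Set G), ∀ x ∈ Y ⊔ N, g' * x * g'⁻¹ ∈ Y ⊔ N := by
    intro g' hg' x hx
    have hx' : x ∈ (Y : Set G) * (N : Set G) := by
      rw [← Subgroup.mul_normal]; exact hx
    obtain ⟨y, hy, n, hn, rfl⟩ := hx'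
    have e : g' * (y * n) * g'⁻¹ = (g' * y * g'⁻¹) * (g' * n * g'⁻¹) := by group
    rw [e]
    exact mul_mem
      ((le_sup_left : Y ≤ Y ⊔ N) ((mem_normalizer_iff.mp hg' y).mp hy))
      ((le_sup_right : N ≤ Y ⊔ N) (‹N.Normal›.conj_mem n hn g'))
  intro g hg
  rw [mem_normalizer_iff]
  intro x
  constructor
  · exact fun hx => key g hg x hx
  · intro hx
    have h2 := key g⁻¹ (inv_mem hg) (g * x * g⁻¹) hx
    have e : g⁻¹ * (g * x * g⁻¹) * g⁻¹⁻¹ = x := by group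
    rwa [e] at h2

lemma aux_coprime_le [Finite G] (H B : Subgroup G) [B.Normal]
    (hco : Nat.Coprime (Nat.card H) (Nat.card N)) : H ⊓ (B ⊔ N) ≤ B := by
  have h1 : B.relIndex (H ⊓ (B ⊔ N)) = Nat.card ((H ⊓ (B ⊔ N)).map (QuotientGroup.mk' B)) := by
    have h := relIndex_ker (H ⊓ (B ⊔ N)) (QuotientGroup.mk' B)
    rwa [QuotientGroup.ker_mk'] at h
  have h2 : (H ⊓ (B ⊔ N)).map (QuotientGroup.mk' B) ≤ N.map (QuotientGroup.mk' B) := by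
    calc (H ⊓ (B ⊔ N)).map (QuotientGroup.mk' B) ≤ (B ⊔ N).map (QuotientGroup.mk' B) :=
          map_mono inf_le_right
      _ = B.map (QuotientGroup.mk' B) ⊔ N.map (QuotientGroup.mk' B) := by rw [Subgroup.map_sup]
      _ = N.map (QuotientGroup.mk' B) := by
          rw [(Subgroup.map_eq_bot_iff _).mpr (le_of_eq (QuotientGroup.ker_mk' B).symm), bot_sup_eq]
  have h3 : Nat.card ((H ⊓ (B ⊔ N)).map (QuotientGroup.mk' B)) ∣ Nat.card (N.map (QuotientGroup.mk' B)) :=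
    card_dvd_of_le h2
  have h4 : Nat.card (N.map (QuotientGroup.mk' B)) ∣ Nat.card N := by
    rw [← relIndex_ker N (QuotientGroup.mk' B)]
    show ((QuotientGroup.mk' B).ker.subgroupOf N).index ∣ Nat.card N
    exact index_dvd_card _
  have h5 : B.relIndex (H ⊓ (B ⊔ N)) ∣ Nat.card H := by
    refine dvd_trans ?_ (card_dvd_of_le (inf_le_left : (H ⊓ (B ⊔ N)) ≤ H))
    show (B.subgroupOf (H ⊓ (B ⊔ N))).index ∣ Nat.card ↥(H ⊓ (B ⊔ N))
    exact index_dvd_card _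
  have h6 : B.relIndex (H ⊓ (B ⊔ N)) ∣ Nat.card N := by
    rw [h1]; exact h3.trans h4
  have hone : B.relIndex (H ⊓ (B ⊔ N)) = 1 :=
    Nat.dvd_one.mp (hco ▸ Nat.dvd_gcd h5 h6)
  exact relIndex_eq_one.mp hone

end Aux

section Aux2
variable {G : Type*} [Group G] (N : Subgroup G) [N.Normal]


lemma dedekind (N B W : Subgroup G) [N.Normal] (h : N ≤ W) :
    (N ⊔ B) ⊓ W = N ⊔ (B ⊓ W) := by
  apply le_antisymm
  · intro x hx
    obtain ⟨hx1, hx2⟩ := mem_inf.mp hx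
    have hx1' : x ∈ (N : Set G) * (B : Set G) := by
      rw [← Subgroup.normal_mul]; exact hx1
    obtain ⟨n, hn, b, hb, rfl⟩ := hx1'
    have hbW : b ∈ W := by
      have e : b = n⁻¹ * (n * b) := by group
      rw [e]; exact mul_mem (inv_mem (h hn)) hx2
    exact mul_mem ((le_sup_left : N ≤ N ⊔ (B ⊓ W)) hn)
      ((le_sup_right : B ⊓ W ≤ N ⊔ (B ⊓ W)) (mem_inf.mpr ⟨hb, hbW⟩))
  · exact sup_le (le_inf le_sup_left h) (inf_le_inf le_sup_right le_rfl)

lemma key_inf {A B : Subgroup G} (hch : IsChiefFactor G A B) (hne : A ⊔ N ≠ B ⊔ N) :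
    B ⊓ (A ⊔ N) = A := by
  obtain ⟨hA, hB, hlt, hmax⟩ := hch
  haveI := hA; haveI := hB
  have hnorm : (B ⊓ (A ⊔ N)).Normal := inferInstance
  rcases hmax (B ⊓ (A ⊔ N)) hnorm (le_inf hlt.le le_sup_left) inf_le_left with h | h
  · exact h
  · exfalso
    apply hne
    have hBle : B ≤ A ⊔ N := inf_eq_left.mp h
    exact le_antisymm (sup_le (hlt.le.trans le_sup_left) le_sup_right)
      (sup_le hBle le_sup_right)

lemma aux_X_eq [Finite G] (H A B : Subgroup G)
    (hAB : A ≤ B)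
    (hAnorm : A.Normal) (hBnorm : B.Normal)
    (hkey : B ⊓ (A ⊔ N) = A)
    (hcase : N ≤ H ∨ Nat.Coprime (Nat.card H) (Nat.card N)) :
    (H ⊔ (A ⊔ N)) ⊓ (B ⊔ N) = ((H ⊔ A) ⊓ B) ⊔ N := by
  haveI := hAnorm; haveI := hBnorm
  apply le_antisymm
  · rcases hcase with hNH | hco
    · have e : H ⊔ (A ⊔ N) = H ⊔ A := by
        rw [← sup_assoc]
        exact sup_eq_left.mpr (hNH.trans le_sup_left)
      rw [e]
      have e2 : (H ⊔ A) ⊓ (B ⊔ N) = ((H ⊔ A) ⊓ B) ⊔ N := by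
        calc (H ⊔ A) ⊓ (B ⊔ N) = (N ⊔ B) ⊓ (H ⊔ A) := by rw [inf_comm, sup_comm]
          _ = N ⊔ (B ⊓ (H ⊔ A)) := dedekind N B (H ⊔ A) (hNH.trans le_sup_left)
          _ = ((H ⊔ A) ⊓ B) ⊔ N := by rw [sup_comm, inf_comm]
      exact le_of_eq e2
    · intro x hx
      obtain ⟨hx1, hx2⟩ := mem_inf.mp hx
      have hx1' : x ∈ (H : Set G) * ((A ⊔ N : Subgroup G) : Set G) := by
        rw [← Subgroup.mul_normal]; exact hx1
      obtain ⟨h1, hh1, m, hm, rfl⟩ := hx1'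
      have hmB : m ∈ B ⊔ N := (sup_le_sup_right hAB N) hm
      have hhm : h1 ∈ H ⊓ (B ⊔ N) := by
        refine mem_inf.mpr ⟨hh1, ?_⟩
        have e : h1 = (h1 * m) * m⁻¹ := by group
        rw [e]
        exact mul_mem hx2 (inv_mem hmB)
      have hB : h1 ∈ B := aux_coprime_le N H B hco hhm
      have hY : h1 ∈ (H ⊔ A) ⊓ B := mem_inf.mpr ⟨(le_sup_left : H ≤ H ⊔ A) hh1, hB⟩
      exact mul_mem ((le_sup_left : (H ⊔ A) ⊓ B ≤ ((H ⊔ A) ⊓ B) ⊔ N) hY)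
        ((sup_le_sup_right (le_inf le_sup_right hAB) N : A ⊔ N ≤ ((H ⊔ A) ⊓ B) ⊔ N) hm)
  · refine sup_le (le_inf ?_ ?_) (le_inf ?_ ?_)
    · exact inf_le_left.trans (sup_le_sup_left le_sup_left H)
    · exact inf_le_right.trans le_sup_left
    · exact le_sup_right.trans le_sup_right
    · exact le_sup_right

lemma aux_chief (A B : Subgroup G) (hch : IsChiefFactor G A B)
    (hne : A ⊔ N ≠ B ⊔ N) :
    IsChiefFactor (G ⧸ N) (map (QuotientGroup.mk' N) (A ⊔ N))
      (map (QuotientGroup.mk' N) (B ⊔ N)) := by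
  obtain ⟨hA, hB, hlt, hmax⟩ := hch
  haveI := hA; haveI := hB
  have hMle : A ⊔ N ≤ B ⊔ N := sup_le_sup_right hlt.le N
  refine ⟨Subgroup.Normal.map inferInstance _ (QuotientGroup.mk'_surjective N),
    Subgroup.Normal.map inferInstance _ (QuotientGroup.mk'_surjective N), ?_, ?_⟩
  · refine lt_of_le_of_ne (map_mono hMle) ?_
    intro hEq
    apply hne
    have h := congrArg (comap (QuotientGroup.mk' N)) hEq
    rwa [aux_comap_map N _ le_sup_right, aux_comap_map N _ le_sup_right] at h
  · intro W' hW' hle1 hle2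
    haveI : (comap (QuotientGroup.mk' N) W').Normal := hW'.comap _
    have hMW : A ⊔ N ≤ comap (QuotientGroup.mk' N) W' := by
      rw [← aux_comap_map N (A ⊔ N) le_sup_right]; exact comap_mono hle1
    have hWL : comap (QuotientGroup.mk' N) W' ≤ B ⊔ N := by
      rw [← aux_comap_map N (B ⊔ N) le_sup_right]; exact comap_mono hle2
    have hWmap : (comap (QuotientGroup.mk' N) W').map (QuotientGroup.mk' N) = W' :=
      map_comap_eq_self_of_surjective (QuotientGroup.mk'_surjective N) W'
    have hNW : N ≤ comap (QuotientGroup.mk' N) W' := le_sup_right.trans hMW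
    haveI : ((comap (QuotientGroup.mk' N) W') ⊓ B).Normal := inferInstance
    rcases hmax ((comap (QuotientGroup.mk' N) W') ⊓ B) this
      (le_inf ((le_sup_left.trans hMW : A ≤ _)) hlt.le) inf_le_right with hc | hc
    · left
      have hW2 : comap (QuotientGroup.mk' N) W' = A ⊔ N := by
        have e1 : comap (QuotientGroup.mk' N) W'
            = comap (QuotientGroup.mk' N) W' ⊓ (B ⊔ N) := (inf_eq_left.mpr hWL).symm
        calc comap (QuotientGroup.mk' N) W'
            = (N ⊔ B) ⊓ comap (QuotientGroup.mk' N) W' :=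
              (inf_eq_right.mpr (hWL.trans (le_of_eq (sup_comm B N)))).symm
          _ = N ⊔ (B ⊓ comap (QuotientGroup.mk' N) W') :=
              dedekind N B _ hNW
          _ = A ⊔ N := by rw [inf_comm, hc, sup_comm]
      rw [← hWmap, hW2]
    · right
      have hW2 : comap (QuotientGroup.mk' N) W' = B ⊔ N :=
        le_antisymm hWL (sup_le (inf_eq_right.mp hc) hNW)
      rw [← hWmap, hW2]


set_option maxHeartbeats 400000 in
lemma aux_picond [Finite G] (H A B : Subgroup G) (hch : IsChiefFactor G A B)
    (hne : A ⊔ N ≠ B ⊔ N)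
    (hcase : N ≤ H ∨ Nat.Coprime (Nat.card H) (Nat.card N))
    (hc : PiCond G H A B) :
    PiCond (G ⧸ N) (H.map (QuotientGroup.mk' N)) (map (QuotientGroup.mk' N) (A ⊔ N))
      (map (QuotientGroup.mk' N) (B ⊔ N)) := by
  obtain ⟨hA, hB, hlt, hmax⟩ := hch
  haveI := hA; haveI := hB
  have hkey : B ⊓ (A ⊔ N) = A := key_inf N ⟨hA, hB, hlt, hmax⟩ hne
  have hXY : (H ⊔ (A ⊔ N)) ⊓ (B ⊔ N) = ((H ⊔ A) ⊓ B) ⊔ N :=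
    aux_X_eq N H A B hlt.le hA hB hkey hcase
  have hYle : A ≤ (H ⊔ A) ⊓ B := le_inf le_sup_right hlt.le
  intro q hq hdvd
  have hmap : (H.map (QuotientGroup.mk' N) ⊔ map (QuotientGroup.mk' N) (A ⊔ N))
      ⊓ map (QuotientGroup.mk' N) (B ⊔ N)
      = map (QuotientGroup.mk' N) (((H ⊔ A) ⊓ B) ⊔ N) := by
    rw [← Subgroup.map_sup,
      ← aux_map_inf N _ _ (le_sup_right.trans le_sup_right) le_sup_right, hXY]
  rw [hmap, aux_map_normalizer N _ le_sup_right,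
    aux_index_map N _ (le_sup_right.trans le_normalizer)] at hdvd
  have hdvd2 : q ∣ (normalizer (((H ⊔ A) ⊓ B : Subgroup G) : Set G)).index :=
    hdvd.trans (index_dvd_of_le (aux_normalizer_le N ((H ⊔ A) ⊓ B)))
  have hres : q ∣ A.relIndex ((H ⊔ A) ⊓ B) := hc q hq hdvd2
  rw [hmap, aux_relIndex_map N (A ⊔ N) (((H ⊔ A) ⊓ B) ⊔ N) le_sup_right
    (sup_le_sup_right hYle N)]
  have e1 : ((H ⊔ A) ⊓ B) ⊔ N = (A ⊔ N) ⊔ ((H ⊔ A) ⊓ B) := by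
    apply le_antisymm
    · exact sup_le (le_sup_right : (H ⊔ A) ⊓ B ≤ _)
        ((le_sup_right : N ≤ A ⊔ N).trans le_sup_left)
    · exact sup_le (sup_le
        (hYle.trans (le_sup_left : (H ⊔ A) ⊓ B ≤ ((H ⊔ A) ⊓ B) ⊔ N))
        (le_sup_right : N ≤ ((H ⊔ A) ⊓ B) ⊔ N))
        (le_sup_left : (H ⊔ A) ⊓ B ≤ ((H ⊔ A) ⊓ B) ⊔ N)
  rw [e1, relIndex_sup_left]
  have e2 : (A ⊔ N) ⊓ ((H ⊔ A) ⊓ B) = A := by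
    apply le_antisymm
    · intro x hx
      obtain ⟨hx1, hx2⟩ := mem_inf.mp hx
      have hxx : x ∈ B ⊓ (A ⊔ N) := mem_inf.mpr ⟨(mem_inf.mp hx2).2, hx1⟩
      exact hkey ▸ hxx
    · exact le_inf le_sup_left hYle
  rw [← inf_relIndex_right, e2]
  exact hres
end Aux2

lemma build_series {Q : Type*} [Group Q] (H' : Subgroup Q) :
    ∀ (n : ℕ) (M : Fin (n + 1) → Subgroup Q), M 0 = ⊥ → M (Fin.last n) = ⊤ →
      (∀ i : Fin n, M i.castSucc = M i.succ ∨
        (IsChiefFactor Q (M i.castSucc) (M i.succ) ∧ PiCond Q H' (M i.castSucc) (M i.succ))) →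
      PartialPiProperty Q H' := by
  intro n
  induction n with
  | zero =>
    intro M h0 htop _
    exact ⟨⟨0, M, h0, htop, fun i => i.elim0⟩, fun i => i.elim0⟩
  | succ m IH =>
    intro M h0 htop hstep
    by_cases hdup : ∃ i : Fin (m + 1), M i.castSucc = M i.succ
    · obtain ⟨i, hi⟩ := hdup
      have Mcongr : ∀ (a b : Fin (m + 2)), (a : ℕ) = (b : ℕ) → M a = M b :=
        fun a b hab => congrArg M (Fin.ext hab)
      have hstep' : ∀ (k : ℕ) (hk : k < m + 1),
          M ⟨k, by omega⟩ = M ⟨k + 1, by omega⟩ ∨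
          (IsChiefFactor Q (M ⟨k, by omega⟩) (M ⟨k + 1, by omega⟩) ∧
            PiCond Q H' (M ⟨k, by omega⟩) (M ⟨k + 1, by omega⟩)) := by
        intro k hk
        have h := hstep ⟨k, hk⟩
        have e1 : M (Fin.castSucc ⟨k, hk⟩) = M ⟨k, by omega⟩ := Mcongr _ _ rfl
        have e2 : M (Fin.succ ⟨k, hk⟩) = M ⟨k + 1, by omega⟩ := Mcongr _ _ rfl
        rwa [e1, e2] at h
      set emb : Fin (m + 1) → Fin (m + 2) := fun j =>
        if (j : ℕ) ≤ (i : ℕ) then ⟨(j : ℕ), by omega⟩ else ⟨(j : ℕ) + 1, by omega⟩ with hemb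
      have embcoe : ∀ j : Fin (m + 1),
          ((emb j : Fin (m + 2)) : ℕ) = if (j : ℕ) ≤ (i : ℕ) then (j : ℕ) else (j : ℕ) + 1 := by
        intro j
        simp only [hemb]
        split <;> rfl
      apply IH (fun j => M (emb j))
      · show M (emb 0) = ⊥
        have e : emb 0 = 0 := Fin.ext (by rw [embcoe]; simp)
        rw [e, h0]
      · show M (emb (Fin.last m)) = ⊤
        by_cases hi' : m ≤ (i : ℕ)
        · have hieq : (i : ℕ) = m := le_antisymm (Nat.lt_succ_iff.mp i.isLt) hi'
          have e : M (emb (Fin.last m)) = M ⟨m, by omega⟩ :=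
            Mcongr _ _ (by rw [embcoe]; simp [Fin.last, hi'])
          have e2 : M ⟨m, by omega⟩ = M ⟨m + 1, by omega⟩ := by
            have c1 : M (⟨m, by omega⟩ : Fin (m + 2)) = M i.castSucc :=
              Mcongr _ _ (by simp [hieq])
            have c2 : M i.succ = M ⟨m + 1, by omega⟩ := Mcongr _ _ (by simp [hieq])
            exact c1.trans (hi.trans c2)
          have e3 : (⟨m + 1, by omega⟩ : Fin (m + 2)) = Fin.last (m + 1) := Fin.ext (by simp [Fin.last])
          rw [e, e2, e3, htop]
        · have e : emb (Fin.last m) = Fin.last (m + 1) :=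
            Fin.ext (by rw [embcoe]; simp [Fin.last]; omega)
          rw [e, htop]
      · intro j
        show M (emb j.castSucc) = M (emb j.succ) ∨ _
        rcases Nat.lt_trichotomy (j : ℕ) (i : ℕ) with h | h | h
        · have e1 : M (emb j.castSucc) = M ⟨(j : ℕ), by omega⟩ :=
            Mcongr _ _ (by rw [embcoe]; simp only [Fin.coe_castSucc]; rw [if_pos (by omega)])
          have e2 : M (emb j.succ) = M ⟨(j : ℕ) + 1, by omega⟩ :=
            Mcongr _ _ (by rw [embcoe]; simp only [Fin.val_succ]; rw [if_pos (by omega)])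
          rw [e1, e2]
          exact hstep' (j : ℕ) (by omega)
        · have e1 : M (emb j.castSucc) = M ⟨(j : ℕ), by omega⟩ :=
            Mcongr _ _ (by rw [embcoe]; simp only [Fin.coe_castSucc]; rw [if_pos (by omega)])
          have e2 : M (emb j.succ) = M ⟨(j : ℕ) + 2, by omega⟩ :=
            Mcongr _ _ (by rw [embcoe]; simp only [Fin.val_succ]; rw [if_neg (by omega)])
          have g1 : M (⟨(j : ℕ), by omega⟩ : Fin (m + 2)) = M ⟨(j : ℕ) + 1, by omega⟩ := by
            have c1 : M (⟨(j : ℕ), by omega⟩ : Fin (m + 2)) = M i.castSucc :=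
              Mcongr _ _ (by simp [h])
            have c2 : M i.succ = M ⟨(j : ℕ) + 1, by omega⟩ := Mcongr _ _ (by simp [h])
            exact c1.trans (hi.trans c2)
          rw [e1, e2, g1]
          have h2 := hstep' ((j : ℕ) + 1) (by omega)
          exact h2
        · have e1 : M (emb j.castSucc) = M ⟨(j : ℕ) + 1, by omega⟩ :=
            Mcongr _ _ (by rw [embcoe]; simp only [Fin.coe_castSucc]; rw [if_neg (by omega)])
          have e2 : M (emb j.succ) = M ⟨(j : ℕ) + 2, by omega⟩ :=
            Mcongr _ _ (by rw [embcoe]; simp only [Fin.val_succ]; rw [if_neg (by omega)])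
          rw [e1, e2]
          exact hstep' ((j : ℕ) + 1) (by omega)
    · refine ⟨⟨m + 1, M, h0, htop, fun i => ?_⟩, fun i => ?_⟩
      · exact ((hstep i).resolve_left (fun hh => hdup ⟨i, hh⟩)).1
      · exact ((hstep i).resolve_left (fun hh => hdup ⟨i, hh⟩)).2

theorem partial_pi_property_quotient
    (G : Type*) [Group G] [Finite G] (H : Subgroup G) (N : Subgroup G)
    [N.Normal]
    (hcase : N ≤ H ∨ Nat.Coprime (Nat.card H) (Nat.card N))
    (h : PartialPiProperty G H) :
    PartialPiProperty (G ⧸ N) (H.map (QuotientGroup.mk' N)) := by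
  obtain ⟨C, hC⟩ := h
  apply build_series (H.map (QuotientGroup.mk' N)) C.len
    (fun i => map (QuotientGroup.mk' N) (C.ser i ⊔ N))
  · show map (QuotientGroup.mk' N) (C.ser 0 ⊔ N) = ⊥
    rw [C.bot_eq, bot_sup_eq]
    exact (Subgroup.map_eq_bot_iff _).mpr (le_of_eq (QuotientGroup.ker_mk' N).symm)
  · show map (QuotientGroup.mk' N) (C.ser (Fin.last C.len) ⊔ N) = ⊤
    rw [C.top_eq, top_sup_eq]
    exact map_top_of_surjective _ (QuotientGroup.mk'_surjective N)
  · intro i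
    by_cases hne : C.ser i.castSucc ⊔ N = C.ser i.succ ⊔ N
    · left
      show map (QuotientGroup.mk' N) _ = map (QuotientGroup.mk' N) _
      rw [hne]
    · right
      exact ⟨aux_chief N _ _ (C.chief i) hne,
        aux_picond N H _ _ (C.chief i) hne hcase (hC i)⟩
end

section
/- Let G be a finite group with an abelian Sylow p-subgroup P. Then G' ∩ Z(G) ∩ P = 1, where G' is the derived subgroup and Z(G) the center of G. -/
theorem derived_inter_center_inter_abelian_sylow_eq_bot
    (G : Type*) [Group G] [Finite G] (p : ℕ) [Fact p.Prime]
    (P : Sylow p G) (hab : ∀ a b : G, a ∈ P → b ∈ P → a * b = b * a) :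
    commutator G ⊓ Subgroup.center G ⊓ (P : Subgroup G) = ⊥ := by
  have hcomm : IsMulCommutative (P : Subgroup G) :=
    ⟨⟨fun a b => Subtype.ext (hab a b a.2 b.2)⟩⟩
  letI : CommGroup (P : Subgroup G) := { (P : Subgroup G).toGroup with mul_comm := hcomm.is_comm.comm }
  rw [Subgroup.eq_bot_iff_forall]
  rintro x ⟨⟨hx1, hx2⟩, hx3⟩
  have hxc : ∀ g : G, g * x = x * g := fun g => (Subgroup.mem_center_iff.mp hx2 g)
  set ϕ : (P : Subgroup G) →* (P : Subgroup G) := MonoidHom.id _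
  have key : ∀ (k : ℕ) (g₀ : G), g₀⁻¹ * x ^ k * g₀ ∈ (P : Subgroup G) →
      g₀⁻¹ * x ^ k * g₀ = x ^ k := by
    intro k g₀ _
    have : x ^ k ∈ Subgroup.center G := (Subgroup.center G).pow_mem hx2 k
    rw [Subgroup.mem_center_iff.mp this g₀⁻¹, mul_assoc, inv_mul_cancel, mul_one]
  have hker : MonoidHom.transfer ϕ x = 1 :=
    Abelianization.commutator_subset_ker (MonoidHom.transfer ϕ) hx1
  have := MonoidHom.transfer_eq_pow ϕ x key
  rw [hker] at this
  have hpow : x ^ (P : Subgroup G).index = 1 := by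
    have h2 := congrArg (Subtype.val) this.symm
    simpa [ϕ] using h2
  have hdvd : orderOf x ∣ (P : Subgroup G).index := orderOf_dvd_of_pow_eq_one hpow
  obtain ⟨k, hk⟩ := P.2 ⟨x, hx3⟩
  have hxk : x ^ p ^ k = 1 := by
    simpa using congrArg Subtype.val hk
  have hdvd2 : orderOf x ∣ p ^ k := orderOf_dvd_of_pow_eq_one hxk
  have hcop : Nat.Coprime (p ^ k) (P : Subgroup G).index :=
    (Nat.Prime.coprime_iff_not_dvd (Fact.out)).mpr P.not_dvd_index |>.pow_left k
  have : orderOf x ∣ 1 := hcop ▸ Nat.dvd_gcd hdvd2 hdvd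
  exact orderOf_eq_one_iff.mp (Nat.dvd_one.mp this)
end

section
/- Let p be a prime divisor of the order of a finite group G with gcd(|G|, p−1) = 1. If G has cyclic Sylow p-subgroups, then G is p-nilpotent. -/
theorem p_nilpotent_of_cyclic_sylow
    (G : Type*) [Group G] [Finite G] (p : ℕ) [Fact p.Prime]
    (hdvd : p ∣ Nat.card G) (hcop : Nat.Coprime (Nat.card G) (p - 1))
    (hcyc : ∀ P : Sylow p G, IsCyclic (P : Subgroup G)) :
    ∃ K : Subgroup G, K.Normal ∧ ¬ p ∣ Nat.card K ∧ ∃ m : ℕ, K.index = p ^ m := by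
  obtain ⟨P⟩ := (inferInstance : Nonempty (Sylow p G))
  haveI : IsCyclic (P : Subgroup G) := hcyc P
  haveI hcomm : IsMulCommutative (P : Subgroup G) :=
    ⟨⟨fun a b => (IsCyclic.commGroup (α := (P : Subgroup G))).mul_comm a b⟩⟩
  -- the key step: normalizer ≤ centralizer
  have hNC : Subgroup.normalizer ((P : Subgroup G) : Set G) ≤ Subgroup.centralizer (P : Set G) := by
    set N := Subgroup.normalizer ((P : Subgroup G) : Set G) with hN
    set f := (P : Subgroup G).normalizerMonoidHom with hf
    have hker : f.ker = (Subgroup.centralizer (P : Set G)).subgroupOf N :=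
      Subgroup.normalizerMonoidHom_ker _
    set q := f.ker.index with hq
    -- q divides card (MulAut P) = totient (p ^ n)
    have h1 : q ∣ Nat.card (MulAut (P : Subgroup G)) := by
      have : q = Nat.card (N ⧸ f.ker) := rfl
      rw [this, Nat.card_congr (QuotientGroup.quotientKerEquivRange f).toEquiv]
      exact Subgroup.card_subgroup_dvd_card f.range
    rw [IsCyclic.card_mulAut, Sylow.card_eq_multiplicity] at h1
    -- q is coprime to p
    have hp2 : ¬ p ∣ q := by
      intro hpq
      have hle : (P : Subgroup G).subgroupOf N ≤ f.ker := by
        rw [hker]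
        exact fun y hy => Subgroup.mem_subgroupOf.mpr (Subgroup.le_centralizer _ (Subgroup.mem_subgroupOf.mp hy))
      have := (Sylow.not_dvd_index' (P.subtype Subgroup.le_normalizer) Subgroup.FiniteIndex.index_ne_zero)
      exact this (hpq.trans (Subgroup.index_dvd_of_le hle))
    -- q divides p - 1
    have hn : 0 < (Nat.card G).factorization p :=
      Nat.Prime.factorization_pos_of_dvd Fact.out Nat.card_pos.ne' hdvd
    rw [Nat.totient_prime_pow Fact.out hn] at h1
    have h2 : q ∣ p - 1 :=
      (Nat.Coprime.pow_right _
        ((Nat.Prime.coprime_iff_not_dvd Fact.out).mpr hp2).symm).dvd_of_dvd_mul_left h1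
    -- q divides card G
    have h3 : q ∣ Nat.card G :=
      (Subgroup.index_dvd_card f.ker).trans (Subgroup.card_subgroup_dvd_card N)
    -- hence q = 1
    have hq1 : q = 1 := Nat.eq_one_of_dvd_coprimes hcop h3 h2
    have hkertop : f.ker = ⊤ := Subgroup.index_eq_one.mp hq1
    intro x hx
    have : (⟨x, hx⟩ : N) ∈ f.ker := hkertop ▸ Subgroup.mem_top _
    rw [hker, Subgroup.mem_subgroupOf] at this
    exact this
  -- Burnside's transfer theorem
  refine ⟨(MonoidHom.transferSylow P hNC).ker, MonoidHom.normal_ker _,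
    MonoidHom.not_dvd_card_ker_transferSylow P hNC, (Nat.card G).factorization p, ?_⟩
  have := (MonoidHom.ker_transferSylow_isComplement' P hNC).symm.index_eq_card
  rw [this, Sylow.card_eq_multiplicity]
end

section
/- Let H be an SS-quasinormal subgroup of a finite group G, i.e., H has a supplement K in G (G = HK) such that H permutes with every Sylow subgroup of K. If H is a p-group, then H is S-semipermutable in G, i.e., H permutes with every Sylow q-subgroup of G for all primes q ≠ p. -/
open Pointwise

private lemma coe_mul_singleton {G : Type*} [Group G] (S : Subgroup G) {h : G} (hh : h ∈ S) :
    (S : Set G) * {h} = S := by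
  ext x
  constructor
  · rintro ⟨a, ha, b, rfl, rfl⟩
    exact S.mul_mem ha hh
  · intro hx
    exact ⟨x * h⁻¹, S.mul_mem hx (S.inv_mem hh), h, rfl, by group⟩

private lemma singleton_mul_coe {G : Type*} [Group G] (S : Subgroup G) {h : G} (hh : h ∈ S) :
    ({h} : Set G) * S = S := by
  ext x
  constructor
  · rintro ⟨a, rfl, b, hb, rfl⟩
    exact S.mul_mem hh hb
  · intro hx
    exact ⟨h, rfl, h⁻¹ * x, S.mul_mem (S.inv_mem hh) hx, by group⟩

private lemma conj_smul_set {G : Type*} [Group G] (h : G) (s : Set G) :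
    MulAut.conj h • s = ({h} : Set G) * s * {h⁻¹} := by
  ext x
  constructor
  · rintro ⟨y, hy, rfl⟩
    exact ⟨h * y, ⟨h, rfl, y, hy, rfl⟩, h⁻¹, rfl, rfl⟩
  · rintro ⟨z, ⟨a, rfl, y, hy, rfl⟩, b, rfl, rfl⟩
    exact ⟨y, hy, rfl⟩

theorem s_semipermutable_of_ss_quasinormal
    (G : Type*) [Group G] [Finite G] (p : ℕ) (hp : p.Prime)
    (H : Subgroup G) (hHp : IsPGroup p H)
    (K : Subgroup G)
    (hsupp : ∀ g : G, ∃ h ∈ H, ∃ k ∈ K, g = h * k)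
    (hperm : ∀ (q : ℕ) (_ : q.Prime) (Q : Subgroup K),
      IsPGroup q Q → ¬ q ∣ Q.index →
      (H : Set G) * (Q.map K.subtype : Subgroup G) =
        (Q.map K.subtype : Subgroup G) * (H : Set G)) :
    ∀ (q : ℕ) (_ : q.Prime), q ≠ p → ∀ Q : Subgroup G,
      IsPGroup q Q → ¬ q ∣ Q.index →
      (H : Set G) * (Q : Set G) = (Q : Set G) * (H : Set G) := by
  intro q hq hqp Q hQpg hQi
  haveI : Fact q.Prime := ⟨hq⟩
  haveI : Fact p.Prime := ⟨hp⟩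
  -- Step A: q does not divide the index of K
  have hKi : ¬ q ∣ K.index := by
    intro hdvd
    obtain ⟨n, hn⟩ := hHp.exists_card_eq
    have hdvd2 : K.index ∣ Nat.card H := by
      let f : H ⧸ K.subgroupOf H → G ⧸ K :=
        Quotient.map' Subtype.val (fun a b hab => by
          rw [QuotientGroup.leftRel_apply] at hab ⊢
          simpa [Subgroup.mem_subgroupOf] using hab)
      have hfs : Function.Surjective f := by
        intro x
        induction x using QuotientGroup.induction_on with
        | H z =>
          obtain ⟨h, hh, k, hk, rfl⟩ := hsupp z
          refine ⟨QuotientGroup.mk (⟨h, hh⟩ : H), ?_⟩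
          show QuotientGroup.mk (h : G) = QuotientGroup.mk (h * k)
          rw [QuotientGroup.eq]
          simpa using hk
      have hfi : Function.Injective f := by
        intro a b
        induction a using QuotientGroup.induction_on with
        | H a =>
          induction b using QuotientGroup.induction_on with
          | H b =>
            intro hab
            have hab' : (QuotientGroup.mk (a : G) : G ⧸ K) = QuotientGroup.mk (b : G) := hab
            rw [QuotientGroup.eq] at hab'
            rw [QuotientGroup.eq]
            simpa [Subgroup.mem_subgroupOf] using hab'
      have hcardeq : Nat.card (G ⧸ K) = Nat.card (H ⧸ K.subgroupOf H) :=
        (Nat.card_eq_of_bijective f ⟨hfi, hfs⟩).symm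
      rw [Subgroup.index_eq_card, hcardeq, ← Subgroup.index_eq_card]
      exact Subgroup.index_dvd_card _
    have : q ∣ p ^ n := hn ▸ hdvd.trans hdvd2
    exact hqp ((Nat.prime_dvd_prime_iff_eq hq hp).mp (hq.dvd_of_dvd_pow this))
  -- Step B: a Sylow q-subgroup of K is a Sylow q-subgroup of G
  obtain ⟨Q₁⟩ : Nonempty (Sylow q K) := inferInstance
  set Pm : Subgroup G := (Q₁ : Subgroup K).map K.subtype with hPmdef
  have hPmq : IsPGroup q Pm := Q₁.2.map K.subtype
  have hPmi : ¬ q ∣ Pm.index := by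
    rw [hPmdef, Subgroup.index_map_subtype]
    intro hdvd
    rcases (Nat.Prime.dvd_mul hq).mp hdvd with h | h
    · exact Q₁.not_dvd_index h
    · exact hKi h
  let P : Sylow q G := hPmq.toSylow hPmi
  let Qs : Sylow q G := hQpg.toSylow hQi
  obtain ⟨g, hg⟩ := MulAction.exists_smul_eq G P Qs
  obtain ⟨h, hh, k, hk, rfl⟩ := hsupp g
  set A : Subgroup G := MulAut.conj k • Pm with hAdef
  have hQeq : Q = MulAut.conj h • A := by
    calc Q = ↑Qs := (IsPGroup.toSylow_coe _ _).symm
      _ = ↑((h * k) • P) := by rw [hg]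
      _ = MulAut.conj (h * k) • (P : Subgroup G) := Sylow.coe_subgroup_smul
      _ = MulAut.conj h • (MulAut.conj k • (P : Subgroup G)) := by
          rw [map_mul, mul_smul]
      _ = MulAut.conj h • A := by rw [hAdef, IsPGroup.toSylow_coe]
  -- A is a subgroup of K
  have hAK : A ≤ K := by
    intro x hx
    obtain ⟨y, hy, rfl⟩ := hx
    have hyK : y ∈ K := Subgroup.map_subtype_le _ hy
    simpa [MulAut.conj_apply] using K.mul_mem (K.mul_mem hk hyK) (K.inv_mem hk)
  set Q₂ : Subgroup K := A.subgroupOf K with hQ₂def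
  have hmapQ₂ : Q₂.map K.subtype = A := by
    rw [hQ₂def, Subgroup.subgroupOf_map_subtype, inf_of_le_left hAK]
  have hApg : IsPGroup q A := hPmq.of_equiv (Subgroup.equivSMul (MulAut.conj k) Pm)
  have hQ₂pg : IsPGroup q Q₂ := hApg.of_equiv (Subgroup.subgroupOfEquivOfLe hAK).symm
  have hQ₂i : ¬ q ∣ Q₂.index := by
    have hcard : Nat.card Q₂ = Nat.card (Q₁ : Subgroup K) := by
      calc Nat.card Q₂ = Nat.card A :=
            Nat.card_congr (Subgroup.subgroupOfEquivOfLe hAK).toEquiv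
        _ = Nat.card Pm :=
            (Nat.card_congr (Subgroup.equivSMul (MulAut.conj k) Pm).toEquiv).symm
        _ = Nat.card (Q₁ : Subgroup K) :=
            (Nat.card_congr
              (Subgroup.equivMapOfInjective _ K.subtype K.subtype_injective).toEquiv).symm
    have h1 : Nat.card Q₂ * Q₂.index = Nat.card K := Subgroup.card_mul_index Q₂
    have h2 : Nat.card (Q₁ : Subgroup K) * (Q₁ : Subgroup K).index = Nat.card K :=
      Subgroup.card_mul_index _
    have hpos : 0 < Nat.card Q₂ := Nat.card_pos
    have hidx : Q₂.index = (Q₁ : Subgroup K).index := by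
      rw [← hcard] at h2
      exact Nat.eq_of_mul_eq_mul_left hpos (h1.trans h2.symm)
    rw [hidx]
    exact Q₁.not_dvd_index
  have hAperm : (H : Set G) * (A : Set G) = (A : Set G) * (H : Set G) := by
    have := hperm q hq Q₂ hQ₂pg hQ₂i
    rwa [hmapQ₂] at this
  -- Final computation
  have hQset : (Q : Set G) = ({h} : Set G) * (A : Set G) * {h⁻¹} := by
    rw [hQeq, Subgroup.coe_pointwise_smul, conj_smul_set]
  have e1 : (H : Set G) * (Q : Set G) = (A : Set G) * (H : Set G) := by
    rw [hQset, ← mul_assoc, ← mul_assoc, coe_mul_singleton H hh, hAperm,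
      mul_assoc, coe_mul_singleton H (H.inv_mem hh)]
  have e2 : (Q : Set G) * (H : Set G) = (A : Set G) * (H : Set G) := by
    rw [hQset, mul_assoc, mul_assoc, singleton_mul_coe H (H.inv_mem hh), ← hAperm,
      ← mul_assoc, singleton_mul_coe H hh, hAperm]
  rw [e1, e2]
end

section
/- Let G be a finite group, N a solvable normal subgroup of G, and H a subgroup of N that is S-conditionally permutable in G (H permutes with at least one Sylow q-subgroup of G for every prime q dividing |G|). Then for every chief factor L/K of G, the index |G/K : N_{G/K}(HK/K ∩ L/K)| is divisible only by primes dividing |HK/K ∩ L/K| (i.e., H satisfies the Π-property in G). -/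
open Pointwise

open Subgroup

section Aux
variable {G : Type*} [Group G]

lemma aux_coe_sup_of_comm (A B : Subgroup G)
    (h : (A : Set G) * (B : Set G) = (B : Set G) * (A : Set G)) :
    ((A ⊔ B : Subgroup G) : Set G) = (A : Set G) * (B : Set G) := by
  let S : Subgroup G :=
    { carrier := (A : Set G) * (B : Set G)
      one_mem' := ⟨1, A.one_mem, 1, B.one_mem, one_mul 1⟩
      mul_mem' := by
        rintro x y ⟨a, ha, b, hb, rfl⟩ ⟨a', ha', b', hb', rfl⟩
        have hmem : (b : G) * a' ∈ (B : Set G) * (A : Set G) := ⟨b, hb, a', ha', rfl⟩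
        rw [← h] at hmem
        obtain ⟨a'', ha'', b'', hb'', heq⟩ := hmem
        refine ⟨a * a'', mul_mem ha ha'', b'' * b', mul_mem hb'' hb', ?_⟩
        calc a * a'' * (b'' * b') = a * (a'' * b'') * b' := by group
          _ = a * (b * a') * b' := by rw [show a'' * b'' = b * a' from heq]
          _ = a * b * (a' * b') := by group
      inv_mem' := by
        rintro x ⟨a, ha, b, hb, rfl⟩
        have hmem : (b : G)⁻¹ * a⁻¹ ∈ (B : Set G) * (A : Set G) :=
          ⟨b⁻¹, inv_mem hb, a⁻¹, inv_mem ha, rfl⟩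
        rw [← h] at hmem
        simpa [mul_inv_rev] using hmem }
  have hle : A ⊔ B ≤ S :=
    sup_le (fun a ha => ⟨a, ha, 1, B.one_mem, mul_one a⟩)
      (fun b hb => ⟨1, A.one_mem, b, hb, one_mul b⟩)
  refine Set.Subset.antisymm (fun x hx => hle hx) ?_
  rintro x ⟨a, ha, b, hb, rfl⟩
  exact mul_mem ((le_sup_left : A ≤ A ⊔ B) ha) ((le_sup_right : B ≤ A ⊔ B) hb)

lemma aux_card_image_mk (A B : Subgroup G) :
    Nat.card ((((↑) : G → G ⧸ B) '' (A : Set G)) : Set (G ⧸ B)) = B.relIndex A := by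
  have e : (↥A ⧸ B.subgroupOf A) ≃ ((((↑) : G → G ⧸ B) '' (A : Set G)) : Set (G ⧸ B)) := by
    refine Equiv.ofBijective (fun x => Quotient.liftOn' x
      (fun a => (⟨QuotientGroup.mk (a : G), ⟨(a : G), a.2, rfl⟩⟩ :
        ((((↑) : G → G ⧸ B) '' (A : Set G)) : Set (G ⧸ B))))
      (fun a b hab => Subtype.ext ?_)) ⟨?_, ?_⟩
    · rw [QuotientGroup.leftRel_apply] at hab
      exact QuotientGroup.eq.mpr (by simpa [Subgroup.mem_subgroupOf] using hab)
    · intro x y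
      refine Quotient.inductionOn₂' x y (fun a b hab => ?_)
      apply Quotient.sound'
      rw [QuotientGroup.leftRel_apply]
      have h2 : (QuotientGroup.mk (a : G) : G ⧸ B) = QuotientGroup.mk (b : G) :=
        congrArg Subtype.val hab
      simpa [Subgroup.mem_subgroupOf] using QuotientGroup.eq.mp h2
    · rintro ⟨y, a, ha, rfl⟩
      exact ⟨Quotient.mk'' ⟨a, ha⟩, rfl⟩
  calc Nat.card ((((↑) : G → G ⧸ B) '' (A : Set G)) : Set (G ⧸ B))
      = Nat.card (↥A ⧸ B.subgroupOf A) := (Nat.card_congr e).symm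
    _ = B.relIndex A := rfl

lemma aux_card_sup_mul_card_inf [Finite G] (A B : Subgroup G)
    (h : (A : Set G) * (B : Set G) = (B : Set G) * (A : Set G)) :
    Nat.card (A ⊔ B : Subgroup G) * Nat.card (A ⊓ B : Subgroup G)
      = Nat.card A * Nat.card B := by
  have h1 : Nat.card (A ⊔ B : Subgroup G)
      = Nat.card (((A : Set G) * (B : Set G)) : Set G) :=
    Nat.card_congr (Equiv.setCongr (aux_coe_sup_of_comm A B h))
  have h2 : B.relIndex A * Nat.card (A ⊓ B : Subgroup G) = Nat.card A := by
    have h3 := Subgroup.card_mul_index (B.subgroupOf A)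
    have h4 : Nat.card (B.subgroupOf A) = Nat.card (A ⊓ B : Subgroup G) := by
      rw [← Subgroup.inf_subgroupOf_left]
      exact Nat.card_congr (Subgroup.subgroupOfEquivOfLe inf_le_left).toEquiv
    calc B.relIndex A * Nat.card (A ⊓ B : Subgroup G)
        = Nat.card (B.subgroupOf A) * (B.subgroupOf A).index := by rw [h4, mul_comm]; rfl
      _ = Nat.card A := h3
  rw [h1, Subgroup.card_mul_eq_card_subgroup_mul_card_quotient B (A : Set G),
    show ((A : Set G).image ((↑) : G → G ⧸ B)) = (((↑) : G → G ⧸ B) '' (A : Set G)) from rfl,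
    aux_card_image_mk]
  calc Nat.card B * B.relIndex A * Nat.card (A ⊓ B : Subgroup G)
      = Nat.card B * (B.relIndex A * Nat.card (A ⊓ B : Subgroup G)) := by ring
    _ = Nat.card B * Nat.card A := by rw [h2]
    _ = Nat.card A * Nat.card B := by ring

end Aux

open scoped commutatorElement in
lemma aux_pgroup {Gq : Type*} [Group Gq] [Finite Gq] (L : Subgroup Gq) (hLn : L.Normal)
    (hne : L ≠ ⊥) (hsol : IsSolvable ↥L)
    (hmin : ∀ M : Subgroup Gq, M.Normal → M ≤ L → M = ⊥ ∨ M = L) :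
    ∃ p : ℕ, p.Prime ∧ IsPGroup p L := by
  haveI := hLn
  have hCle : (⁅L, L⁆ : Subgroup Gq) ≤ L :=
    Subgroup.commutator_le.mpr fun g hg h hh => by
      rw [commutatorElement_def]
      exact mul_mem (mul_mem (mul_mem hg hh) (inv_mem hg)) (inv_mem hh)
  rcases hmin ⁅L, L⁆ inferInstance hCle with hbot | htop
  · -- abelian case
    have hcomm : ∀ x ∈ L, ∀ y ∈ L, Commute x y := by
      intro x hx y hy
      have : ⁅x, y⁆ ∈ (⁅L, L⁆ : Subgroup Gq) := Subgroup.commutator_mem_commutator hx hy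
      rw [hbot, Subgroup.mem_bot] at this
      exact commutatorElement_eq_one_iff_commute.mp this
    haveI : Nontrivial ↥L := (Subgroup.nontrivial_iff_ne_bot L).mpr hne
    have hcard : Nat.card ↥L ≠ 1 := by
      have := Finite.one_lt_card (α := ↥L)
      omega
    obtain ⟨p, hp, hpd⟩ := Nat.exists_prime_and_dvd hcard
    haveI : Fact p.Prime := ⟨hp⟩
    refine ⟨p, hp, ?_⟩
    let P : Subgroup Gq :=
      { carrier := {x | x ∈ L ∧ ∃ n : ℕ, x ^ p ^ n = 1}
        one_mem' := ⟨L.one_mem, 0, one_pow _⟩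
        inv_mem' := by
          rintro x ⟨hx, n, hn⟩
          exact ⟨L.inv_mem hx, n, by rw [inv_pow, hn, inv_one]⟩
        mul_mem' := by
          rintro x y ⟨hx, n, hn⟩ ⟨hy, m, hm⟩
          refine ⟨L.mul_mem hx hy, n + m, ?_⟩
          rw [(hcomm x hx y hy).mul_pow, pow_add, pow_mul, hn, one_pow, one_mul,
            mul_comm (p ^ n), pow_mul, hm, one_pow] }
    have hPn : P.Normal := by
      constructor
      rintro x ⟨hx, n, hn⟩ g
      refine ⟨hLn.conj_mem x hx g, n, ?_⟩
      have : (g * x * g⁻¹) ^ p ^ n = g * x ^ p ^ n * g⁻¹ := by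
        rw [← MulAut.conj_apply, ← map_pow, MulAut.conj_apply]
      rw [this, hn, mul_one, mul_inv_cancel]
    have hPL : P ≤ L := fun x hx => hx.1
    have hPne : P ≠ ⊥ := by
      obtain ⟨x, hx⟩ := exists_prime_orderOf_dvd_card' (G := ↥L) p hpd
      have hx1 : (x : Gq) ≠ 1 := by
        intro h
        have : x = 1 := Subtype.ext h
        rw [this, orderOf_one] at hx
        exact hp.ne_one hx.symm
      have hxP : (x : Gq) ∈ P := by
        refine ⟨x.2, 1, ?_⟩
        have := pow_orderOf_eq_one x
        rw [hx] at this
        have := congrArg (Subtype.val) this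
        simpa [pow_one] using this
      intro h
      rw [h, Subgroup.mem_bot] at hxP
      exact hx1 hxP
    rcases hmin P hPn hPL with h | h
    · exact absurd h hPne
    · intro g
      have : (g : Gq) ∈ P := by rw [h]; exact g.2
      obtain ⟨-, n, hn⟩ := this
      exact ⟨n, by ext; simpa using hn⟩
  · -- perfect case: contradiction with solvability
    exfalso
    have hcomm_top : commutator ↥L = ⊤ := by
      have hmap : Subgroup.map L.subtype (commutator ↥L) = ⁅L, L⁆ := by
        rw [_root_.commutator_def, Subgroup.map_commutator]
        congr 1 <;>
          rw [← MonoidHom.range_eq_map, Subgroup.range_subtype]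
      have : Subgroup.map L.subtype (commutator ↥L) = Subgroup.map L.subtype ⊤ := by
        rw [hmap, htop, ← MonoidHom.range_eq_map, Subgroup.range_subtype]
      exact Subgroup.map_injective L.subtype_injective this
    have hall : ∀ n : ℕ, derivedSeries ↥L n = ⊤ := by
      intro n
      induction n with
      | zero => exact derivedSeries_zero ↥L
      | succ n ih => rw [derivedSeries_succ, ih, ← _root_.commutator_def, hcomm_top]
    obtain ⟨n, hn⟩ := hsol.solvable
    haveI : Nontrivial ↥L := (Subgroup.nontrivial_iff_ne_bot L).mpr hne
    rw [hall n] at hn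
    exact absurd hn top_ne_bot

theorem pi_property_of_s_conditionally_permutable
    (G : Type*) [Group G] [Finite G]
    (N : Subgroup G) (hNn : N.Normal) (hNsol : IsSolvable N)
    (H : Subgroup G) (hHN : H ≤ N)
    (hscp : ∀ q : ℕ, q.Prime → q ∣ Nat.card G →
      ∃ Q : Subgroup G, IsPGroup q Q ∧ ¬ q ∣ Q.index ∧
        (H : Set G) * (Q : Set G) = (Q : Set G) * (H : Set G)) :
    PiProperty G H := by
  rintro K L ⟨hKn, hLn, hKL, hchief⟩ q hq hqdvd
  haveI := hKn; haveI := hLn; haveI := hNn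
  set D : Subgroup G := (H ⊔ K) ⊓ L with hDdef
  have hKD : K ≤ D := le_inf le_sup_right hKL.le
  by_cases hDK : D = K
  · rw [hDK, (Subgroup.normalizer_eq_top_iff).mpr hKn, Subgroup.index_top, Nat.dvd_one] at hqdvd
    exact absurd hqdvd hq.ne_one
  have hNLK : ¬ (N ⊓ L ≤ K) := by
    intro hle
    apply hDK
    refine le_antisymm ?_ hKD
    rintro x ⟨hx1, hx2⟩
    have hx1' : x ∈ N ⊔ K := (sup_le_sup_right hHN K) hx1
    rw [← SetLike.mem_coe, Subgroup.mul_normal N K] at hx1'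
    obtain ⟨n, hn, k, hk, rfl⟩ := hx1'
    have hnL : n ∈ L := by
      have h0 : n = n * k * k⁻¹ := by group
      rw [h0]
      exact L.mul_mem hx2 (L.inv_mem (hKL.le hk))
    exact K.mul_mem (hle ⟨hn, hnL⟩) hk
  have hLeq : (N ⊓ L) ⊔ K = L := by
    rcases hchief ((N ⊓ L) ⊔ K) inferInstance le_sup_right
        (sup_le inf_le_right hKL.le) with h | h
    · exact absurd (le_trans le_sup_left h.le) hNLK
    · exact h
  set φ : G →* G ⧸ K := QuotientGroup.mk' K with hφdef
  have hφs : Function.Surjective φ := QuotientGroup.mk'_surjective K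
  have hker : φ.ker = K := QuotientGroup.ker_mk' K
  have hmapK : K.map φ = ⊥ := by
    rw [eq_bot_iff]
    rintro x ⟨y, hy, rfl⟩
    have hy' : y ∈ φ.ker := by rw [hker]; exact hy
    simpa [Subgroup.mem_bot] using hy'
  set Hb : Subgroup (G ⧸ K) := H.map φ with hHbdef
  set Lb : Subgroup (G ⧸ K) := L.map φ with hLbdef
  have hcomapL : Lb.comap φ = L := by
    rw [hLbdef, Subgroup.comap_map_eq, hker, sup_eq_left.mpr hKL.le]
  haveI hLbn : Lb.Normal := hLn.map φ hφs
  have hLbne : Lb ≠ ⊥ := by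
    intro h
    refine hKL.not_ge (fun x hx => ?_)
    have hx1 : φ x ∈ Lb := Subgroup.mem_map_of_mem φ hx
    rw [h, Subgroup.mem_bot] at hx1
    have hx2 : x ∈ φ.ker := hx1
    rwa [hker] at hx2
  have hmin : ∀ M : Subgroup (G ⧸ K), M.Normal → M ≤ Lb → M = ⊥ ∨ M = Lb := by
    intro M hMn hML
    have h1 : K ≤ M.comap φ := by
      intro x hx
      have hx' : x ∈ φ.ker := by rw [hker]; exact hx
      have hx1 : φ x = 1 := hx'
      show φ x ∈ M
      rw [hx1]; exact M.one_mem
    have h2 : M.comap φ ≤ L := by rw [← hcomapL]; exact Subgroup.comap_mono hML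
    rcases hchief (M.comap φ) (hMn.comap φ) h1 h2 with h | h
    · left
      have h3 := congrArg (Subgroup.map φ) h
      rwa [Subgroup.map_comap_eq_self_of_surjective hφs, hmapK] at h3
    · right
      have h3 := congrArg (Subgroup.map φ) h
      rwa [Subgroup.map_comap_eq_self_of_surjective hφs] at h3
  have hsolvLb : IsSolvable ↥Lb := by
    have hLb2 : Lb = (N ⊓ L).map φ := by
      conv_lhs => rw [hLbdef, ← hLeq]
      rw [Subgroup.map_sup, hmapK, sup_bot_eq]
    haveI : Group.IsSolvable N := hNsol
    haveI : Group.IsSolvable ↥(N ⊓ L) :=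
      solvable_of_solvable_injective (Subgroup.inclusion_injective (inf_le_left : N ⊓ L ≤ N))
    have hrange : (φ.comp (N ⊓ L).subtype).range = (N ⊓ L).map φ := by
      rw [MonoidHom.range_comp, Subgroup.range_subtype]
    haveI : Group.IsSolvable ↥(φ.comp (N ⊓ L).subtype).range :=
      solvable_of_surjective (MonoidHom.rangeRestrict_surjective (φ.comp (N ⊓ L).subtype))
    rw [hLb2, ← hrange]
    exact this
  obtain ⟨p, hp, hpL⟩ := aux_pgroup Lb hLbn hLbne hsolvLb hmin
  set Db : Subgroup (G ⧸ K) := Hb ⊓ Lb with hDbdef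
  have hDcomap : Db.comap φ = D := by
    rw [hDbdef, Subgroup.comap_inf, hHbdef, Subgroup.comap_map_eq, hker, hcomapL]
  have hmapD : D.map φ = Db := by
    rw [← hDcomap, Subgroup.map_comap_eq_self_of_surjective hφs]
  have hrel : K.relIndex D = Nat.card Db := by
    have h9 := Subgroup.relIndex_ker (K := D) φ
    rwa [hker, hmapD] at h9
  have hDbne : Db ≠ ⊥ := by
    intro h
    apply hDK
    rw [← hDcomap, h]
    have h1 : (⊥ : Subgroup (G ⧸ K)).comap φ = φ.ker := rfl
    rw [h1, hker]
  haveI : Fact p.Prime := ⟨hp⟩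
  have hDbp : IsPGroup p Db := hpL.to_le inf_le_right
  obtain ⟨k, hk⟩ := IsPGroup.iff_card.mp hDbp
  have hkpos : k ≠ 0 := by
    intro h
    rw [h, pow_zero, Subgroup.card_eq_one] at hk
    exact hDbne hk
  rw [hrel, hk]
  by_cases hqp : q = p
  · exact hqp ▸ dvd_pow_self p hkpos
  exfalso
  have hqG : q ∣ Nat.card G := hqdvd.trans (Subgroup.index_dvd_card _)
  obtain ⟨Q, hQp, hQi, hQc⟩ := hscp q hq hqG
  set Qb : Subgroup (G ⧸ K) := Q.map φ with hQbdef
  have hQbp : IsPGroup q Qb := hQp.map φ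
  have hHQc : (Hb : Set (G ⧸ K)) * (Qb : Set (G ⧸ K))
      = (Qb : Set (G ⧸ K)) * (Hb : Set (G ⧸ K)) := by
    rw [hHbdef, hQbdef, Subgroup.coe_map, Subgroup.coe_map, ← Set.image_mul, hQc,
      Set.image_mul]
  set R : Subgroup (G ⧸ K) := Hb ⊔ Qb with hRdef
  set S : Subgroup (G ⧸ K) := Hb ⊔ Lb with hSdef
  have hHLc : (Hb : Set (G ⧸ K)) * (Lb : Set (G ⧸ K))
      = (Lb : Set (G ⧸ K)) * (Hb : Set (G ⧸ K)) :=
    Subgroup.set_mul_normal_comm (Hb : Set (G ⧸ K)) Lb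
  have hRLc : (R : Set (G ⧸ K)) * (Lb : Set (G ⧸ K))
      = (Lb : Set (G ⧸ K)) * (R : Set (G ⧸ K)) :=
    Subgroup.set_mul_normal_comm (R : Set (G ⧸ K)) Lb
  have hLQc : (Lb : Set (G ⧸ K)) * (Qb : Set (G ⧸ K))
      = (Qb : Set (G ⧸ K)) * (Lb : Set (G ⧸ K)) :=
    (Subgroup.set_mul_normal_comm (Qb : Set (G ⧸ K)) Lb).symm
  have hScoe : (S : Set (G ⧸ K)) = (Hb : Set (G ⧸ K)) * (Lb : Set (G ⧸ K)) := by
    rw [hSdef]; exact Subgroup.mul_normal Hb Lb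
  have hSQc : (S : Set (G ⧸ K)) * (Qb : Set (G ⧸ K))
      = (Qb : Set (G ⧸ K)) * (S : Set (G ⧸ K)) := by
    rw [hScoe]
    calc (Hb : Set (G ⧸ K)) * Lb * Qb = (Hb : Set (G ⧸ K)) * (Lb * Qb) := mul_assoc _ _ _
      _ = (Hb : Set (G ⧸ K)) * (Qb * Lb) := by rw [hLQc]
      _ = (Hb : Set (G ⧸ K)) * Qb * Lb := (mul_assoc _ _ _).symm
      _ = (Qb : Set (G ⧸ K)) * Hb * Lb := by rw [hHQc]
      _ = (Qb : Set (G ⧸ K)) * (Hb * Lb) := mul_assoc _ _ _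
  have e1 := aux_card_sup_mul_card_inf Hb Qb hHQc
  have e2 := aux_card_sup_mul_card_inf Hb Lb hHLc
  have e3 := aux_card_sup_mul_card_inf R Lb hRLc
  have e4 := aux_card_sup_mul_card_inf S Qb hSQc
  have hUS : S ⊔ Qb = R ⊔ Lb := by rw [hSdef, hRdef]; exact sup_right_comm Hb Lb Qb
  rw [hUS] at e4
  rw [← hRdef] at e1
  rw [← hSdef, ← hDbdef] at e2
  set u := Nat.card (R ⊔ Lb : Subgroup (G ⧸ K)) with hu
  set t := Nat.card (R ⊓ Lb : Subgroup (G ⧸ K)) with ht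
  set w := Nat.card (S ⊓ Qb : Subgroup (G ⧸ K)) with hw
  set d := Nat.card Db with hd
  set b1 := Nat.card (Hb ⊓ Qb : Subgroup (G ⧸ K)) with hb1
  set h0 := Nat.card Hb with hh0
  set l0 := Nat.card Lb with hl0
  set q0 := Nat.card Qb with hq0
  set r0 := Nat.card R with hr0
  set s0 := Nat.card S with hs0
  -- e1 : r0 * b1 = h0 * q0, e2 : s0 * d = h0 * l0, e3 : u * t = r0 * l0, e4 : u * w = s0 * q0
  have hA : r0 * l0 * w = s0 * q0 * t := by
    calc r0 * l0 * w = u * t * w := by rw [e3]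
      _ = u * w * t := by ring
      _ = s0 * q0 * t := by rw [e4]
  have hB : (h0 * q0) * (l0 * w * d) = (h0 * l0) * (q0 * t * b1) := by
    calc (h0 * q0) * (l0 * w * d) = (r0 * b1) * (l0 * w * d) := by rw [e1]
      _ = (r0 * l0 * w) * (b1 * d) := by ring
      _ = (s0 * q0 * t) * (b1 * d) := by rw [hA]
      _ = (s0 * d) * (q0 * t * b1) := by ring
      _ = (h0 * l0) * (q0 * t * b1) := by rw [e2]
  have hpos : 0 < h0 * l0 * q0 :=
    Nat.mul_pos (Nat.mul_pos Nat.card_pos Nat.card_pos) Nat.card_pos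
  have hdw : d * w = b1 * t := by
    apply Nat.eq_of_mul_eq_mul_left hpos
    calc h0 * l0 * q0 * (d * w) = (h0 * q0) * (l0 * w * d) := by ring
      _ = (h0 * l0) * (q0 * t * b1) := hB
      _ = h0 * l0 * q0 * (b1 * t) := by ring
  have hDbR : Db ≤ R ⊓ Lb :=
    le_inf (le_trans inf_le_left le_sup_left) inf_le_right
  have hdt : d ∣ t := Subgroup.card_dvd_of_le hDbR
  have hbw : b1 ∣ w :=
    Subgroup.card_dvd_of_le (le_inf (le_trans inf_le_left le_sup_left) inf_le_right)
  obtain ⟨a, ha⟩ := hdt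
  obtain ⟨b, hb⟩ := hbw
  have hab : a = b := by
    have h5 : d * b1 * a = d * b1 * b := by
      calc d * b1 * a = b1 * (d * a) := by ring
        _ = b1 * t := by rw [ha]
        _ = d * w := hdw.symm
        _ = d * (b1 * b) := by rw [hb]
        _ = d * b1 * b := by ring
    exact Nat.eq_of_mul_eq_mul_left (Nat.mul_pos Nat.card_pos Nat.card_pos) h5
  obtain ⟨nL, hnL⟩ := IsPGroup.iff_card.mp hpL
  haveI : Fact q.Prime := ⟨hq⟩
  obtain ⟨nQ, hnQ⟩ := IsPGroup.iff_card.mp hQbp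
  have hal : a ∣ p ^ nL := by
    rw [← hnL]
    have h6 : a ∣ t := ⟨d, by rw [ha]; ring⟩
    exact h6.trans (hl0 ▸ Subgroup.card_dvd_of_le (inf_le_right : R ⊓ Lb ≤ Lb))
  have hbq : b ∣ q ^ nQ := by
    rw [← hnQ]
    have h6 : b ∣ w := ⟨b1, by rw [hb]; ring⟩
    exact h6.trans (hq0 ▸ Subgroup.card_dvd_of_le (inf_le_right : S ⊓ Qb ≤ Qb))
  have hco : Nat.Coprime (p ^ nL) (q ^ nQ) :=
    ((Nat.coprime_primes hp hq).mpr (fun h => hqp h.symm)).pow nL nQ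
  have ha1 : a = 1 := Nat.dvd_one.mp (hco ▸ Nat.dvd_gcd hal (hab ▸ hbq))
  have htd : t = d := by rw [ha, ha1, mul_one]
  have hDbeq : Db = R ⊓ Lb := Subgroup.eq_of_le_of_card_ge hDbR htd.le
  have hQn : Q ≤ normalizer (D : Set G) := by
    intro x hx
    rw [Subgroup.mem_normalizer_iff]
    intro y
    have key : ∀ g ∈ R, ∀ z ∈ R ⊓ Lb, g * z * g⁻¹ ∈ R ⊓ Lb := by
      intro g hg z hz
      obtain ⟨hz1, hz2⟩ := Subgroup.mem_inf.mp hz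
      exact Subgroup.mem_inf.mpr
        ⟨R.mul_mem (R.mul_mem hg hz1) (R.inv_mem hg), hLbn.conj_mem z hz2 g⟩
    have hxR : φ x ∈ R := (le_sup_right : Qb ≤ R) (Subgroup.mem_map_of_mem φ hx)
    have hD' : D = (R ⊓ Lb).comap φ := by rw [← hDbeq]; exact hDcomap.symm
    rw [hD']
    simp only [Subgroup.mem_comap, map_mul, map_inv]
    constructor
    · intro hy
      exact key _ hxR _ hy
    · intro hy
      have h7 := key _ (inv_mem hxR) _ hy
      have h8 : (φ x)⁻¹ * (φ x * φ y * (φ x)⁻¹) * ((φ x)⁻¹)⁻¹ = φ y := by group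
      rwa [h8] at h7
  exact hQi (hqdvd.trans (Subgroup.index_dvd_of_le hQn))
end

section
/- Let P be a finite p-group and α a p'-automorphism of P (an automorphism of order coprime to p). If α centralizes Ω₂(P) (the subgroup generated by elements of order dividing p²), then α = 1. If α centralizes Ω₁(P) and P is not a non-abelian 2-group, then α = 1. -/
open Subgroup

namespace OmegaAux

universe u

variable {P : Type u} [Group P]

private lemma fix_pow (β : MulAut P) (n : ℕ) (x : P) (h : β x = x) : (β ^ n) x = x := by
  induction n with
  | zero => simp
  | succ n ih => rw [pow_succ, MulAut.mul_apply, h, ih]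

private def fixedSub (β : MulAut P) : Subgroup P where
  carrier := {x | β x = x}
  one_mem' := map_one β
  mul_mem' := by
    intro a b ha hb
    simp only [Set.mem_setOf_eq] at *
    rw [map_mul, ha, hb]
  inv_mem' := by
    intro a ha
    simp only [Set.mem_setOf_eq] at *
    rw [map_inv, ha]

private lemma mem_fixedSub {β : MulAut P} {x : P} : x ∈ fixedSub β ↔ β x = x := Iff.rfl

private def restrictAut (β : MulAut P) (H : Subgroup P) (hH : ∀ x ∈ H, β x ∈ H)
    (hH' : ∀ x ∈ H, β⁻¹ x ∈ H) : MulAut ↥H where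
  toFun x := ⟨β x, hH x x.2⟩
  invFun x := ⟨β⁻¹ x, hH' x x.2⟩
  left_inv x := Subtype.ext (by simp [MulAut.inv_def])
  right_inv x := Subtype.ext (by simp [MulAut.inv_def])
  map_mul' x y := Subtype.ext (map_mul β (x : P) (y : P))

private lemma restrictAut_coe (β : MulAut P) (H : Subgroup P) (hH : ∀ x ∈ H, β x ∈ H)
    (hH' : ∀ x ∈ H, β⁻¹ x ∈ H) (x : ↥H) :
    (((restrictAut β H hH hH') x : ↥H) : P) = β (x : P) := rfl

private lemma restrictAut_pow_coe (β : MulAut P) (H : Subgroup P) (hH : ∀ x ∈ H, β x ∈ H)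
    (hH' : ∀ x ∈ H, β⁻¹ x ∈ H) (n : ℕ) (x : ↥H) :
    ((((restrictAut β H hH hH') ^ n) x : ↥H) : P) = (β ^ n) (x : P) := by
  induction n with
  | zero => rfl
  | succ n ih =>
    rw [pow_succ', pow_succ', MulAut.mul_apply, MulAut.mul_apply, ← ih]
    rfl

private lemma inv_invariant [Finite P] (β : MulAut P) (H : Subgroup P)
    (hH : ∀ x ∈ H, β x ∈ H) : ∀ x ∈ H, β⁻¹ x ∈ H := by
  have hinj : Function.Injective (fun x : ↥H => (⟨β x, hH x x.2⟩ : ↥H)) := by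
    intro a b hab
    exact Subtype.ext (β.injective (congrArg Subtype.val hab))
  have hsurj := Finite.injective_iff_surjective.mp hinj
  intro x hx
  obtain ⟨y, hy⟩ := hsurj ⟨x, hx⟩
  have h1 : β (y : P) = x := congrArg Subtype.val hy
  have h2 : β⁻¹ x = (y : P) := by rw [← h1]; simp [MulAut.inv_def]
  rw [h2]; exact y.2

private lemma exists_pow_p {Q : Type*} [Group Q] {p : ℕ} :
    ∀ (k : ℕ) (a : Q), a ≠ 1 → a ^ p ^ k = 1 → ∃ b : Q, b ≠ 1 ∧ b ^ p = 1 := by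
  intro k
  induction k with
  | zero =>
    intro a ha hk
    simp only [pow_zero, pow_one] at hk
    exact absurd hk ha
  | succ k ih =>
    intro a ha hk
    by_cases h : a ^ p = 1
    · exact ⟨a, ha, h⟩
    · exact ih (a ^ p) h (by rw [← pow_mul, ← pow_succ']; exact hk)

private lemma mk'_eq_one_iff {C : Subgroup P} [C.Normal] (z : P) :
    QuotientGroup.mk' C z = 1 ↔ z ∈ C := by
  rw [← MonoidHom.mem_ker, QuotientGroup.ker_mk']

private lemma mk'_eq_iff {C : Subgroup P} [C.Normal] (x y : P) :
    QuotientGroup.mk' C x = QuotientGroup.mk' C y ↔ x * y⁻¹ ∈ C := by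
  rw [← mul_inv_eq_one, ← map_inv, ← map_mul, mk'_eq_one_iff]

/-- The preimage of the "commuting with everything mod C" condition. -/
private def commSub (C : Subgroup P) (hN : C.Normal) : Subgroup P where
  carrier := {x | ∀ g : P, x * g * x⁻¹ * g⁻¹ ∈ C}
  one_mem' := by intro g; simpa using C.one_mem
  mul_mem' := by
    intro a b ha hb
    intro g
    have h1 : a * (b * g * b⁻¹ * g⁻¹) * a⁻¹ ∈ C := hN.conj_mem _ (hb g) a
    have h2 : a * g * a⁻¹ * g⁻¹ ∈ C := ha g
    have he : a * b * g * (a * b)⁻¹ * g⁻¹ =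
        (a * (b * g * b⁻¹ * g⁻¹) * a⁻¹) * (a * g * a⁻¹ * g⁻¹) := by group
    rw [he]
    exact C.mul_mem h1 h2
  inv_mem' := by
    intro a ha
    intro g
    have h1 := ha (a⁻¹ * g * a)
    have he : (a * (a⁻¹ * g * a) * a⁻¹ * (a⁻¹ * g * a)⁻¹)⁻¹ = a⁻¹ * g * a⁻¹⁻¹ * g⁻¹ := by group
    rw [← he]
    exact C.inv_mem h1

private lemma mem_commSub {C : Subgroup P} {hN : C.Normal} {x : P} :
    x ∈ commSub C hN ↔ ∀ g : P, x * g * x⁻¹ * g⁻¹ ∈ C := Iff.rfl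

/-- The subgroup of elements whose p-th power lies in C, given P/C abelian. -/
private def powSub (p : ℕ) (C : Subgroup P) (hN : C.Normal)
    (hcomm : ∀ x y : P, x * y * x⁻¹ * y⁻¹ ∈ C) : Subgroup P where
  carrier := {x | x ^ p ∈ C}
  one_mem' := by simpa using C.one_mem
  mul_mem' := by
    intro a b ha hb
    haveI := hN
    set π := QuotientGroup.mk' C with hπ
    have hcom : Commute (π a) (π b) := by
      show π a * π b = π b * π a
      rw [← map_mul, ← map_mul, mk'_eq_iff]
      have he : a * b * (b * a)⁻¹ = a * b * a⁻¹ * b⁻¹ := by group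
      rw [he]; exact hcomm a b
    have h2 : π ((a * b) ^ p) = 1 := by
      rw [map_pow, map_mul, hcom.mul_pow, ← map_pow, ← map_pow,
        (mk'_eq_one_iff _).mpr ha, (mk'_eq_one_iff _).mpr hb, one_mul]
    exact (mk'_eq_one_iff _).mp h2
  inv_mem' := by
    intro a ha
    show a⁻¹ ^ p ∈ C
    rw [inv_pow]
    exact C.inv_mem ha

private lemma mem_powSub {p : ℕ} {C : Subgroup P} {hN : C.Normal}
    {hcomm : ∀ x y : P, x * y * x⁻¹ * y⁻¹ ∈ C} {x : P} :
    x ∈ powSub p C hN hcomm ↔ x ^ p ∈ C := Iff.rfl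

private def HypOmega (p : ℕ) (P : Type u) [Group P] (β : MulAut P) : Prop :=
  (∀ x : P, x ^ p ^ 2 = 1 → β x = x) ∨
    ((∀ x : P, x ^ p = 1 → β x = x) ∧ (p ≠ 2 ∨ ∀ a b : P, a * b = b * a))

end OmegaAux

namespace OmegaAux

private lemma main_lemma {p q : ℕ} (hp : p.Prime) (hq : q.Prime) (hqp : q ≠ p) :
    ∀ (n : ℕ) (P : Type u) [Group P] [Finite P],
      Nat.card P ≤ n → IsPGroup p P → ∀ β : MulAut P, β ^ q = 1 → HypOmega p P β → β = 1 := by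
  intro n
  induction n using Nat.strong_induction_on with
  | _ n ih =>
  intro P _instG _instF hcard hP β hβq hyp
  by_contra hβ1
  haveI : Fact p.Prime := ⟨hp⟩
  set C : Subgroup P := fixedSub β with hCdef
  have hfixC : ∀ x ∈ C, β x = x := fun x hx => hx
  have hCiff : ∀ z : P, z ∈ C ↔ β z ∈ C := by
    intro z
    constructor
    · intro hz
      have h1 : β z = z := hz
      rw [mem_fixedSub, h1]
      exact h1
    · intro hz
      have h1 : β (β z) = β z := hz
      exact β.injective h1
  have hCiff' : ∀ z : P, β⁻¹ z ∈ C ↔ z ∈ C := by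
    intro z
    rw [hCiff (β⁻¹ z)]
    have h2 : β (β⁻¹ z) = z := by simp [MulAut.inv_def]
    rw [h2]
  -- key: proper invariant subgroups are fixed pointwise
  have key : ∀ H : Subgroup P, H ≠ ⊤ → (∀ x ∈ H, β x ∈ H) → H ≤ C := by
    intro H hHtop hHinv
    have hHinv' := inv_invariant β H hHinv
    have hrq : (restrictAut β H hHinv hHinv') ^ q = 1 := by
      ext x
      have h1 := restrictAut_pow_coe β H hHinv hHinv' q x
      rw [hβq] at h1
      have h2 : ((((restrictAut β H hHinv hHinv') ^ q) x : ↥H) : P) = ((x : ↥H) : P) := h1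
      simpa using Subtype.ext h2
    have hcardlt : Nat.card ↥H < n := by
      have h1 : Nat.card ↥H ∣ Nat.card P := Subgroup.card_subgroup_dvd_card H
      have h2 : Nat.card ↥H ≠ Nat.card P := fun h => hHtop (Subgroup.eq_top_of_card_eq H h)
      have h3 : (0 : ℕ) < Nat.card P := Nat.card_pos
      exact lt_of_lt_of_le (lt_of_le_of_ne (Nat.le_of_dvd h3 h1) h2) hcard
    have hypH : HypOmega p ↥H (restrictAut β H hHinv hHinv') := by
      cases hyp with
      | inl h =>
        refine Or.inl fun x hx => Subtype.ext ?_
        rw [restrictAut_coe]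
        refine h (x : P) ?_
        have := congrArg (Subtype.val) hx
        simpa using this
      | inr h =>
        refine Or.inr ⟨fun x hx => Subtype.ext ?_, ?_⟩
        · rw [restrictAut_coe]
          refine h.1 (x : P) ?_
          have := congrArg (Subtype.val) hx
          simpa using this
        · rcases h.2 with h2 | h2
          · exact Or.inl h2
          · exact Or.inr fun a b => Subtype.ext (h2 (a : P) (b : P))
    have hres := ih (Nat.card ↥H) hcardlt ↥H le_rfl (hP.to_subgroup H)
      (restrictAut β H hHinv hHinv') hrq hypH
    intro x hx
    have h1 := congrArg (fun e : MulAut ↥H => ((e ⟨x, hx⟩ : ↥H) : P)) hres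
    exact (by simpa [restrictAut_coe] using h1 : β x = x)
  -- β ≠ 1 consequences
  have hCtop : C ≠ ⊤ := by
    intro h
    apply hβ1
    ext x
    simpa using hfixC x (h ▸ Subgroup.mem_top x)
  obtain ⟨x1, hx1⟩ : ∃ x : P, x ∉ C := by
    by_contra h
    push_neg at h
    exact hCtop ((Subgroup.eq_top_iff' C).mpr h)
  -- stability argument
  have stab : ¬(∀ x : P, x⁻¹ * β x ∈ C) := by
    intro hstab
    apply hβ1
    ext x
    have ht : β (x⁻¹ * β x) = x⁻¹ * β x := hstab x
    have hbx : β x = x * (x⁻¹ * β x) := by group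
    have hk : ∀ k : ℕ, (β ^ k) x = x * (x⁻¹ * β x) ^ k := by
      intro k
      induction k with
      | zero => simp
      | succ k ihk =>
        rw [pow_succ', MulAut.mul_apply, ihk, map_mul, map_pow, ht,
          pow_succ' (x⁻¹ * β x) k, ← mul_assoc]
        exact congrArg (· * (x⁻¹ * β x) ^ k) hbx
    have hq1 : x = x * (x⁻¹ * β x) ^ q := by
      have h1 := hk q
      rwa [hβq, MulAut.one_apply] at h1
    have htq : (x⁻¹ * β x) ^ q = 1 := by
      calc (x⁻¹ * β x) ^ q = x⁻¹ * (x * (x⁻¹ * β x) ^ q) := by group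
        _ = x⁻¹ * x := by rw [← hq1]
        _ = 1 := by group
    obtain ⟨k, hpk⟩ := hP (x⁻¹ * β x)
    have h1 : orderOf (x⁻¹ * β x) ∣ q := orderOf_dvd_of_pow_eq_one htq
    have h2 : orderOf (x⁻¹ * β x) ∣ p ^ k := orderOf_dvd_of_pow_eq_one hpk
    have hco : Nat.Coprime q (p ^ k) := ((Nat.coprime_primes hq hp).mpr hqp).pow_right k
    have ht1 : x⁻¹ * β x = 1 :=
      orderOf_eq_one_iff.mp (Nat.eq_one_of_dvd_coprimes hco h1 h2)
    have hfx : β x = x := (inv_mul_eq_one.mp ht1).symm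
    simpa using hfx
  -- C is normal
  have hCnormal : C.Normal := by
    rw [← Subgroup.normalizer_eq_top_iff]
    by_contra hN
    have hNinv : ∀ x ∈ (Subgroup.normalizer (C : Set P)), β x ∈ (Subgroup.normalizer (C : Set P)) := by
      intro x hx
      rw [Subgroup.mem_normalizer_iff] at hx ⊢
      intro h
      have e1 : β x * h * (β x)⁻¹ = β (x * β⁻¹ h * x⁻¹) := by
        rw [map_mul, map_mul, map_inv]
        simp [MulAut.inv_def]
      calc h ∈ C ↔ β⁻¹ h ∈ C := (hCiff' h).symm
        _ ↔ x * β⁻¹ h * x⁻¹ ∈ C := hx (β⁻¹ h)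
        _ ↔ β (x * β⁻¹ h * x⁻¹) ∈ C := hCiff _
        _ ↔ β x * h * (β x)⁻¹ ∈ C := by rw [e1]
    have hNle := key (Subgroup.normalizer (C : Set P)) hN hNinv
    haveI : Group.IsNilpotent P := hP.isNilpotent
    have hnc : NormalizerCondition P := normalizerCondition_of_isNilpotent
    have hlt : C < (Subgroup.normalizer (C : Set P)) := hnc C (lt_top_iff_ne_top.mpr hCtop)
    exact hlt.ne (le_antisymm Subgroup.le_normalizer hNle)
  haveI := hCnormal
  have hconjC : ∀ (x : P), ∀ c ∈ C, x * c * x⁻¹ ∈ C := fun x c hc => hCnormal.conj_mem c hc x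
  -- the quotient P / C is abelian : all commutators lie in C
  have hπone : ∀ z : P, QuotientGroup.mk' C z = 1 ↔ z ∈ C := fun z => mk'_eq_one_iff z
  haveI hQnt : Nontrivial (P ⧸ C) :=
    ⟨⟨QuotientGroup.mk' C x1, 1, fun h => hx1 ((hπone x1).mp h)⟩⟩
  haveI : Nontrivial (Subgroup.center (P ⧸ C)) := (hP.to_quotient C).center_nontrivial
  have hcommC : ∀ x y : P, x * y * x⁻¹ * y⁻¹ ∈ C := by
    by_cases hD : commSub C hCnormal = ⊤
    · intro x y
      exact (hD ▸ Subgroup.mem_top x : x ∈ commSub C hCnormal) y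
    · exfalso
      -- find an element of the preimage of the center not in C
      obtain ⟨u, hu⟩ := exists_ne (1 : Subgroup.center (P ⧸ C))
      have huc : ((u : P ⧸ C)) ≠ 1 := fun h => hu (Subtype.ext h)
      obtain ⟨x0, hx0⟩ := QuotientGroup.mk'_surjective C (u : P ⧸ C)
      have hx0D : x0 ∈ commSub C hCnormal := by
        intro g
        rw [← hπone]
        have hcom := Subgroup.mem_center_iff.mp u.2 (QuotientGroup.mk' C g)
        rw [map_mul, map_mul, map_mul, map_inv, map_inv, hx0, ← hcom]
        group
      have hx0C : x0 ∉ C := fun h => huc (by rw [← hx0]; exact (hπone x0).mpr h)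
      have hDinv : ∀ x ∈ commSub C hCnormal, β x ∈ commSub C hCnormal := by
        intro x hx g
        have h1 : x * (β⁻¹ g) * x⁻¹ * (β⁻¹ g)⁻¹ ∈ C := hx (β⁻¹ g)
        have h2 : β (x * (β⁻¹ g) * x⁻¹ * (β⁻¹ g)⁻¹) = β x * g * (β x)⁻¹ * g⁻¹ := by
          rw [map_mul, map_mul, map_mul, map_inv, map_inv]
          simp [MulAut.inv_def]
        rw [← h2]
        exact (hCiff _).mp h1
      exact hx0C (key _ hD hDinv hx0D)
  -- all p-th powers lie in C
  have hEp : ∀ x : P, x ^ p ∈ C := by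
    by_cases hE : powSub p C hCnormal hcommC = ⊤
    · intro x
      exact (hE ▸ Subgroup.mem_top x : x ∈ powSub p C hCnormal hcommC)
    · exfalso
      obtain ⟨k1, hk1⟩ := (hP.to_quotient C) (QuotientGroup.mk' C x1)
      obtain ⟨b, hb1, hbp⟩ := exists_pow_p k1 (QuotientGroup.mk' C x1)
        (fun h => hx1 ((hπone x1).mp h)) hk1
      obtain ⟨x2, hx2⟩ := QuotientGroup.mk'_surjective C b
      have hx2E : x2 ∈ powSub p C hCnormal hcommC := by
        rw [mem_powSub, ← hπone, map_pow, hx2]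
        exact hbp
      have hx2C : x2 ∉ C := fun h => hb1 (by rw [← hx2]; exact (hπone x2).mpr h)
      have hEinv : ∀ x ∈ powSub p C hCnormal hcommC, β x ∈ powSub p C hCnormal hcommC := by
        intro x hx
        rw [mem_powSub] at hx ⊢
        have h1 : (β x) ^ p = β (x ^ p) := (map_pow β x p).symm
        rw [h1, hfixC _ hx]
        exact hx
      exact hx2C (key _ hE hEinv hx2E)
  -- case split on the centralizer of C
  by_cases hW : Subgroup.centralizer (C : Set P) = ⊤
  · -- C is central
    have hcen : ∀ c ∈ C, ∀ w : P, c * w = w * c := by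
      intro c hc w
      have h1 : w ∈ Subgroup.centralizer (C : Set P) := hW ▸ Subgroup.mem_top w
      exact (Subgroup.mem_centralizer_iff.mp h1) c hc
    -- commutator power identity
    have I1 : ∀ x y : P, ∀ m : ℕ, x ^ m * y * (x ^ m)⁻¹ * y⁻¹ = (x * y * x⁻¹ * y⁻¹) ^ m := by
      intro x y m
      induction m with
      | zero => simp
      | succ m ihm =>
        have hc : (x ^ m * y * (x ^ m)⁻¹ * y⁻¹) * x = x * (x ^ m * y * (x ^ m)⁻¹ * y⁻¹) :=
          hcen _ (hcommC (x ^ m) y) x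
        have step : x ^ (m + 1) * y * (x ^ (m + 1))⁻¹ * y⁻¹ =
            (x ^ m * y * (x ^ m)⁻¹ * y⁻¹) * (x * y * x⁻¹ * y⁻¹) := by
          have e1 : x ^ (m + 1) * y * (x ^ (m + 1))⁻¹ * y⁻¹ =
              x * (x ^ m * y * (x ^ m)⁻¹ * y⁻¹) * x⁻¹ * (x * y * x⁻¹ * y⁻¹) := by
            rw [pow_succ' x m]; group
          rw [e1, ← hc]; group
        rw [step, ihm, ← pow_succ]
    have hcp : ∀ x y : P, (x * y * x⁻¹ * y⁻¹) ^ p = 1 := by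
      intro x y
      rw [← I1]
      have h1 : x ^ p * y = y * x ^ p := hcen _ (hEp x) y
      rw [h1]; group
    -- binomial-type identity
    have I2 : ∀ x y : P, ∀ m : ℕ,
        (x * y) ^ m = x ^ m * y ^ m * (y * x * y⁻¹ * x⁻¹) ^ (m.choose 2) := by
      intro x y m
      induction m with
      | zero => simp
      | succ m ihm =>
        have hzc : ∀ (j : ℕ) (w : P),
            (y * x * y⁻¹ * x⁻¹) ^ j * w = w * (y * x * y⁻¹ * x⁻¹) ^ j :=
          fun j w => hcen _ (Subgroup.pow_mem C (hcommC y x) j) w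
        have hz := I1 y x m
        have hyx : y ^ m * x = (y * x * y⁻¹ * x⁻¹) ^ m * (x * y ^ m) := by
          rw [← hz]; group
        have hch : (m + 1).choose 2 = m + m.choose 2 := by
          have h0 := Nat.choose_succ_succ' m 1
          simpa [Nat.choose_one_right] using h0
        rw [pow_succ (x * y) m, ihm, pow_succ x m, pow_succ y m, hch, pow_add]
        rw [mul_assoc (x ^ m * y ^ m) ((y * x * y⁻¹ * x⁻¹) ^ (m.choose 2)) (x * y),
          hzc (m.choose 2) (x * y)]
        simp only [← mul_assoc]
        congr 1
        rw [mul_assoc (x ^ m) (y ^ m) x, hyx, ← hzc m (x ^ m * x * y ^ m * y)]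
        simp only [← mul_assoc]
        rw [hzc m (x ^ m)]
    -- obtain uniform data : an exponent m killing things
    obtain ⟨m, hmC, hmfix, hmz⟩ : ∃ m : ℕ, (∀ x : P, x ^ m ∈ C) ∧
        (∀ x : P, x ^ m = 1 → β x = x) ∧
        (∀ a b : P, (a * b * a⁻¹ * b⁻¹) ^ (m.choose 2) = 1) := by
      cases hyp with
      | inl h =>
        refine ⟨p ^ 2, fun x => ?_, h, fun a b => ?_⟩
        · rw [pow_two, pow_mul]
          exact hEp (x ^ p)
        · -- p divides (p^2).choose 2
          have hdvd : p ∣ (p ^ 2).choose 2 := by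
            rcases Nat.Prime.eq_two_or_odd' hp with h2 | hodd
            · subst h2; decide
            · rw [Nat.choose_two_right]
              have h2 : 2 ∣ p ^ 2 - 1 := by
                obtain ⟨t, ht⟩ := hodd.pow (n := 2)
                omega
              rw [Nat.mul_div_assoc _ h2]
              exact Dvd.dvd.mul_right (dvd_pow_self p two_ne_zero) _
          obtain ⟨c, hc⟩ := hdvd
          rw [hc, pow_mul, hcp a b, one_pow]
      | inr h =>
        refine ⟨p, hEp, h.1, fun a b => ?_⟩
        rcases h.2 with h2 | h2
        · have hdvd : p ∣ p.choose 2 := by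
            rw [Nat.choose_two_right]
            have hodd := hp.odd_of_ne_two h2
            obtain ⟨t, ht⟩ := hodd
            have h3 : 2 ∣ p - 1 := by omega
            rw [Nat.mul_div_assoc _ h3]
            exact Dvd.dvd.mul_right dvd_rfl _
          obtain ⟨c, hc⟩ := hdvd
          rw [hc, pow_mul, hcp a b, one_pow]
        · have : a * b * a⁻¹ * b⁻¹ = 1 := by rw [h2 a b]; group
          rw [this, one_pow]
    -- conclude
    apply stab
    intro x
    have hxmC : x ^ m ∈ C := hmC x
    have hbm : (β x) ^ m = x ^ m := by rw [← map_pow]; exact hfixC _ hxmC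
    have ht : (x⁻¹ * β x) ^ m = 1 := by
      rw [I2 x⁻¹ (β x) m, hmz (β x) x⁻¹, mul_one, inv_pow, hbm, inv_mul_cancel]
    exact (hmfix _ ht : β _ = _)
  · -- centralizer of C is a proper invariant subgroup
    have hWinv : ∀ x ∈ Subgroup.centralizer (C : Set P), β x ∈ Subgroup.centralizer (C : Set P) := by
      intro x hx
      rw [Subgroup.mem_centralizer_iff] at hx ⊢
      intro c hc
      calc c * β x = β (c * x) := by rw [map_mul, hfixC c hc]
        _ = β (x * c) := by rw [← hx c hc]
        _ = β x * c := by rw [map_mul, hfixC c hc]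
    have hWle := key _ hW hWinv
    apply stab
    intro x
    apply hWle
    rw [Subgroup.mem_centralizer_iff]
    intro c hc
    have hconj : β x * c * (β x)⁻¹ = x * c * x⁻¹ := by
      have h1 : β (x * c * x⁻¹) = β x * c * (β x)⁻¹ := by
        rw [map_mul, map_mul, map_inv, hfixC c hc]
      rw [← h1]
      exact hfixC _ (hconjC x c hc)
    calc c * (x⁻¹ * β x) = x⁻¹ * (x * c * x⁻¹) * β x := by group
      _ = x⁻¹ * (β x * c * (β x)⁻¹) * β x := by rw [hconj]
      _ = (x⁻¹ * β x) * c := by group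

end OmegaAux

theorem pPrime_automorphism_trivial_of_centralizing_omega
    (P : Type*) [Group P] [Finite P] (p : ℕ) (hp : p.Prime)
    (hP : IsPGroup p P) (α : MulAut P) (hα : Nat.Coprime (orderOf α) p) :
    ((∀ x : P, x ^ p ^ 2 = 1 → α x = x) → α = 1) ∧
      (((∀ x : P, x ^ p = 1 → α x = x) ∧
          (p ≠ 2 ∨ ∀ a b : P, a * b = b * a)) → α = 1) := by
  have hmain : OmegaAux.HypOmega p P α → α = 1 := by
    intro hyp
    by_contra hα1
    have hm1 : orderOf α ≠ 1 := fun h => hα1 (orderOf_eq_one_iff.mp h)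
    have hq : (orderOf α).minFac.Prime := Nat.minFac_prime hm1
    have hqm : (orderOf α).minFac ∣ orderOf α := Nat.minFac_dvd _
    have hqp : (orderOf α).minFac ≠ p := by
      intro h
      have h1 : p ∣ orderOf α := h ▸ hqm
      have h2 : p ∣ Nat.gcd (orderOf α) p := Nat.dvd_gcd h1 dvd_rfl
      rw [Nat.Coprime.gcd_eq_one hα] at h2
      exact hp.one_lt.ne' (Nat.dvd_one.mp h2)
    have hmpos : 0 < orderOf α := Nat.pos_of_ne_zero (fun h => by
      have := orderOf_pos α
      omega)
    set β := α ^ (orderOf α / (orderOf α).minFac) with hβdef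
    have hβq : β ^ (orderOf α).minFac = 1 := by
      rw [hβdef, ← pow_mul, Nat.div_mul_cancel hqm, pow_orderOf_eq_one]
    have hfixpow : ∀ x : P, α x = x → β x = x := fun x hx =>
      OmegaAux.fix_pow α (orderOf α / (orderOf α).minFac) x hx
    have hβhyp : OmegaAux.HypOmega p P β := by
      cases hyp with
      | inl h => exact Or.inl fun x hx => hfixpow x (h x hx)
      | inr h => exact Or.inr ⟨fun x hx => hfixpow x (h.1 x hx), h.2⟩
    have hβ1 : β = 1 :=
      OmegaAux.main_lemma hp hq hqp (Nat.card P) P le_rfl hP β hβq hβhyp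
    have hdvd : orderOf α ∣ orderOf α / (orderOf α).minFac :=
      orderOf_dvd_of_pow_eq_one (hβdef ▸ hβ1)
    have hpos : 0 < orderOf α / (orderOf α).minFac :=
      Nat.div_pos (Nat.minFac_le hmpos) hq.pos
    have hle : orderOf α ≤ orderOf α / (orderOf α).minFac := Nat.le_of_dvd hpos hdvd
    have hlt : orderOf α / (orderOf α).minFac < orderOf α :=
      Nat.div_lt_self hmpos hq.one_lt
    omega
  exact ⟨fun h => hmain (Or.inl h), fun h => hmain (Or.inr h)⟩
end
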